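/- arXiv:2604.06072 — 7 statements merged into one kernel-verified Lean document; each statement's English description precedes it below -/
import Mathlib

section
/- Let I = ⊕_a B(H^a_in) and O = ⊕_b B(H^b_out) be finite-dimensional C*-algebras and let Φ : I → O be a linear map. Then Φ is completely positive if and only if its Choi-type invariant C_Φ = Σ_{i,j,a} e^a_{ij} ⊗ Φ(e^a_{ji}) is a positive element of the C*-algebra B(H_in) ⊗ O^op; equivalently, if and only if C_Φ, regarded as an adjointable operator on the right Hilbert O^op-module M_Φ = H_in ⊗ O^op, satisfies ⟨ξ, C_Φ(ξ)⟩_{O^op} ≥ 0 for all ξ ∈ M_Φ. -/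
/-!
STATEMENT 0: Let `I = ⊕_a B(H^a_in)` and `O = ⊕_b B(H^b_out)` be finite-dimensional
C*-algebras (realized as direct sums of matrix algebras, acting block-diagonally on
`H_in = ⊕_a H^a_in` and `H_out = ⊕_b H^b_out`), and let `Φ : I → O` be a linear map.
Then `Φ` is completely positive iff its Choi-type invariant
`C_Φ = Σ_{i,j,a} e^a_{ij} ⊗ Φ(e^a_{ji})` is a positive element of `B(H_in) ⊗ O^op`
(represented faithfully on `H_in ⊗ conj(H_out)`, where `O^op` acts via `y ↦ yᵀ`);
equivalently, iff `⟨ξ, C_Φ ξ⟩_{O^op} ≥ 0` for every `ξ` in the right Hilbert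
`O^op`-module `M_Φ = H_in ⊗ O^op` (where positivity of an element of `O^op` is
positivity in the faithful block-diagonal representation).
-/

open scoped ComplexOrder Kronecker Matrix

namespace Stmt0

/-- The multimatrix algebra `⊕ᵢ B(ℂ^{d i})`. -/
abbrev PiMat (ι : Type) (d : ι → Type) [∀ i, Fintype (d i)] : Type _ :=
  ∀ i, Matrix (d i) (d i) ℂ

/-- Matrix over an operator algebra, viewed as one big matrix. -/
def toBig {k d : Type} (X : Matrix k k (Matrix d d ℂ)) : Matrix (k × d) (k × d) ℂ :=
  Matrix.of fun p q => X p.1 q.1 p.2 q.2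

variable {ιa ιb : Type} [Fintype ιa] [DecidableEq ιa] [Fintype ιb] [DecidableEq ιb]
  {da : ιa → Type} [∀ a, Fintype (da a)] [∀ a, DecidableEq (da a)]
  {db : ιb → Type} [∀ b, Fintype (db b)] [∀ b, DecidableEq (db b)]

/-- The matrix unit `e^a_{ij}` of the multimatrix algebra. -/
def eMat (a : ιa) (i j : da a) : PiMat ιa da :=
  Pi.single a (Matrix.single i j 1)

/-- Complete positivity of a linear map between multimatrix algebras: every positive
matrix over the input algebra (positivity read off in the faithful block-diagonal
representation) is sent, entrywise, to a positive matrix over the output algebra. -/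
def IsCP (Φ : PiMat ιa da →ₗ[ℂ] PiMat ιb db) : Prop :=
  ∀ (n : ℕ) (X : Matrix (Fin n) (Fin n) (PiMat ιa da)),
    (toBig (X.map (Matrix.blockDiagonal' (α := ℂ)))).PosSemidef →
    (toBig ((X.map ⇑Φ).map (Matrix.blockDiagonal' (α := ℂ)))).PosSemidef

/-- The Choi-type invariant `C_Φ = Σ_{i,j,a} e^a_{ij} ⊗ Φ(e^a_{ji})`, as an element of
`B(H_in) ⊗ O^op` faithfully represented on `H_in ⊗ conj(H_out)` via
`A ⊗ y ↦ A ⊗ₖ yᵀ`. -/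
noncomputable def choiMat (Φ : PiMat ιa da →ₗ[ℂ] PiMat ιb db) :
    Matrix ((Σ a, da a) × (Σ b, db b)) ((Σ a, da a) × (Σ b, db b)) ℂ :=
  ∑ a : ιa, ∑ i : da a, ∑ j : da a,
    (Matrix.single (⟨a, i⟩ : Σ a, da a) (⟨a, j⟩ : Σ a, da a) (1 : ℂ)) ⊗ₖ
      (Matrix.blockDiagonal' (Φ (eMat a j i)))ᵀ

/-! ### Helper lemmas -/

set_option linter.unusedSectionVars false

lemma psd_of_forall {m : Type} [Fintype m] [DecidableEq m] (M : Matrix m m ℂ)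
    (h : ∀ x : m → ℂ, 0 ≤ dotProduct (star x) (M.mulVec x)) : M.PosSemidef := by
  refine Matrix.PosSemidef.of_dotProduct_mulVec_nonneg ?_ h
  rw [Matrix.isHermitian_iff_isSymmetric, LinearMap.isSymmetric_iff_inner_map_self_real]
  intro v
  obtain ⟨x, rfl⟩ := (WithLp.equiv 2 (m → ℂ)).symm.surjective v
  rw [show (WithLp.equiv 2 (m → ℂ)).symm x = WithLp.toLp 2 x from rfl,
    Matrix.toEuclideanLin_apply_piLp_toLp, EuclideanSpace.inner_toLp_toLp, dotProduct_comm]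
  have : dotProduct (star (M *ᵥ x)) x = star (dotProduct (star x) (M *ᵥ x)) := by
    simp [dotProduct, map_sum, mul_comm]
  rw [this]
  exact congrArg star ((IsSelfAdjoint.of_nonneg (h x)))

lemma qf_expand {m : Type} [Fintype m] (M : Matrix m m ℂ) (v : m → ℂ) :
    star v ⬝ᵥ M *ᵥ v = ∑ p, ∑ q, (starRingEnd ℂ) (v p) * M p q * v q := by
  simp [dotProduct, Matrix.mulVec, Finset.mul_sum, mul_assoc]

lemma qf_sum {m : Type} [Fintype m] {γ : Type} (s : Finset γ) (f : γ → Matrix m m ℂ)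
    (v : m → ℂ) :
    star v ⬝ᵥ (∑ c ∈ s, f c) *ᵥ v = ∑ c ∈ s, star v ⬝ᵥ (f c) *ᵥ v := by
  classical
  induction s using Finset.induction_on with
  | empty => simp
  | insert _ _ h ih =>
      rw [Finset.sum_insert h, Finset.sum_insert h, ← ih, Matrix.add_mulVec,
        dotProduct_add]

lemma sum_sigma_univ {ι : Type} [Fintype ι] {d : ι → Type} [∀ i, Fintype (d i)]
    {β : Type} [AddCommMonoid β] (f : (Σ i, d i) → β) :
    ∑ a, ∑ i, f ⟨a,i⟩ = ∑ s : Σ i, d i, f s := by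
  rw [← Finset.univ_sigma_univ, Finset.sum_sigma]

lemma bd_eMat (a : ιa) (i j : da a) :
    Matrix.blockDiagonal' (eMat a i j) =
      Matrix.single (⟨a,i⟩ : Σ a, da a) (⟨a,j⟩ : Σ a, da a) (1:ℂ) := by
  ext ⟨a₁,i₁⟩ ⟨a₂,j₂⟩
  rw [Matrix.blockDiagonal'_apply]
  rcases eq_or_ne a₁ a₂ with rfl | h
  · simp only [dif_pos rfl, cast_eq]
    unfold eMat
    rcases eq_or_ne a a₁ with rfl | ha
    · simp [Matrix.single, Pi.single_eq_same, Sigma.mk.inj_iff]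
    · simp [Pi.single_eq_of_ne (Ne.symm ha), Matrix.single, Sigma.mk.inj_iff, ha]
  · simp only [dif_neg h, Matrix.single, Matrix.of_apply, Sigma.mk.inj_iff]
    rw [eq_comm, ite_eq_right_iff]
    rintro ⟨h1, h2⟩
    rw [Sigma.mk.inj_iff] at h1 h2
    exact absurd (h1.1.symm.trans h2.1) h

lemma eq_sum_eMat (x : PiMat ιa da) : x = ∑ a, ∑ i, ∑ j, x a i j • eMat a i j := by
  funext a₀
  simp only [Finset.sum_apply, Pi.smul_apply, eMat]
  rw [Finset.sum_eq_single a₀ (fun b _ hb => by simp [Pi.single_eq_of_ne (Ne.symm hb)]) (by simp)]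
  simp only [Pi.single_eq_same]
  nth_rewrite 1 [Matrix.matrix_eq_sum_single (x a₀)]
  exact Finset.sum_congr rfl fun i _ => Finset.sum_congr rfl fun j _ => by
    rw [Matrix.smul_single, smul_eq_mul, mul_one]

/-- `blockDiagonal'` as a linear map. -/
def bdLin (ι : Type) [DecidableEq ι] (d : ι → Type) [∀ i, Fintype (d i)] :
    PiMat ι d →ₗ[ℂ] Matrix (Σ i, d i) (Σ i, d i) ℂ where
  toFun := Matrix.blockDiagonal'
  map_add' := Matrix.blockDiagonal'_add
  map_smul' c x := Matrix.blockDiagonal'_smul c x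

lemma bdLin_apply {ι : Type} [DecidableEq ι] {d : ι → Type} [∀ i, Fintype (d i)]
    (x : PiMat ι d) : (bdLin ι d) x = Matrix.blockDiagonal' x := rfl

lemma qstd {S T : Type} [Fintype S] [DecidableEq S] [Fintype T]
    (s s' : S) (N : Matrix T T ℂ) (v : S × T → ℂ) :
    star v ⬝ᵥ ((Matrix.single s s' (1:ℂ)) ⊗ₖ N) *ᵥ v
      = ∑ u : T, ∑ u' : T, (starRingEnd ℂ) (v (s,u)) * N u u' * v (s',u') := by
  simp only [dotProduct, Matrix.mulVec, Fintype.sum_prod_type,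
    Matrix.kroneckerMap_apply, Matrix.single, Matrix.of_apply, Pi.star_apply,
    dotProduct, RCLike.star_def, ite_mul, one_mul, zero_mul, mul_ite, mul_zero,
    Finset.mul_sum]
  simp only [ite_and, Finset.sum_ite_irrel, Finset.sum_const_zero, Finset.sum_ite_eq,
    Finset.mem_univ, if_true]
  exact Finset.sum_congr rfl fun u _ => Finset.sum_congr rfl fun u' _ => by ring

/-- The quadratic form of the Choi matrix. -/
lemma qchoi (Φ : PiMat ιa da →ₗ[ℂ] PiMat ιb db) (v : (Σ a, da a) × (Σ b, db b) → ℂ) :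
    star v ⬝ᵥ (choiMat Φ) *ᵥ v
      = ∑ a, ∑ i, ∑ j, ∑ u, ∑ u', (starRingEnd ℂ) (v (⟨a,i⟩,u))
          * Matrix.blockDiagonal' (Φ (eMat a j i)) u' u * v (⟨a,j⟩,u') := by
  unfold choiMat
  rw [qf_sum]
  refine Finset.sum_congr rfl fun a _ => ?_
  rw [qf_sum]
  refine Finset.sum_congr rfl fun i _ => ?_
  rw [qf_sum]
  refine Finset.sum_congr rfl fun j _ => ?_
  rw [qstd]
  exact Finset.sum_congr rfl fun u _ => Finset.sum_congr rfl fun u' _ => by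
    rw [Matrix.transpose_apply]

/-- The quadratic form of a big matrix. -/
lemma qbig {n : Type} [Fintype n] (Y : Matrix n n (PiMat ιb db))
    (w : n × (Σ b, db b) → ℂ) :
    star w ⬝ᵥ (toBig (Y.map (Matrix.blockDiagonal' (α := ℂ)))) *ᵥ w
      = ∑ p, ∑ t, ∑ q, ∑ t', (starRingEnd ℂ) (w (p,t))
          * Matrix.blockDiagonal' (Y p q) t t' * w (q,t') := by
  rw [qf_expand]
  rw [Fintype.sum_prod_type]
  refine Finset.sum_congr rfl fun p _ => Finset.sum_congr rfl fun t _ => ?_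
  rw [Fintype.sum_prod_type]
  rfl


lemma qf2 {m : Type} [Fintype m] (M : Matrix m m ℂ) (z y : m → ℂ) :
    star z ⬝ᵥ M *ᵥ y = ∑ p, ∑ q, (starRingEnd ℂ) (z p) * M p q * y q := by
  simp [dotProduct, Matrix.mulVec, Finset.mul_sum, mul_assoc]

lemma bd_sum {γ : Type} (s : Finset γ) (f : γ → PiMat ιb db) :
    Matrix.blockDiagonal' (α := ℂ) (∑ c ∈ s, f c)
      = ∑ c ∈ s, Matrix.blockDiagonal' (f c) :=
  map_sum (bdLin ιb db) f s

lemma bd_mul (x y : PiMat ιb db) :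
    Matrix.blockDiagonal' (α := ℂ) (x * y)
      = Matrix.blockDiagonal' x * Matrix.blockDiagonal' y := by
  rw [← Matrix.blockDiagonal'_mul]; rfl

lemma bd_star (x : PiMat ιb db) :
    Matrix.blockDiagonal' (α := ℂ) (star x) = (Matrix.blockDiagonal' x)ᴴ := by
  rw [Matrix.blockDiagonal'_conjTranspose]; rfl

/-- Key identity: the quadratic form of the block-diagonal representation of
`∑ ξ_j Φ(e_{ji}) ξ_i*` equals a quadratic form of the Choi matrix. -/
lemma qxi (Φ : PiMat ιa da →ₗ[ℂ] PiMat ιb db) (ξ : (Σ a, da a) → PiMat ιb db)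
    (w : (Σ b, db b) → ℂ) :
    star w ⬝ᵥ (Matrix.blockDiagonal' (α := ℂ)
        (∑ a : ιa, ∑ i : da a, ∑ j : da a,
          ξ ⟨a, j⟩ * Φ (eMat a j i) * star (ξ ⟨a, i⟩))) *ᵥ w
    = star (fun su : (Σ a, da a) × (Σ b, db b) =>
          (starRingEnd ℂ) (((Matrix.blockDiagonal' (ξ su.1))ᴴ *ᵥ w) su.2)) ⬝ᵥ
        choiMat Φ *ᵥ (fun su : (Σ a, da a) × (Σ b, db b) =>
          (starRingEnd ℂ) (((Matrix.blockDiagonal' (ξ su.1))ᴴ *ᵥ w) su.2)) := by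
  rw [qchoi, bd_sum, qf_sum]
  refine Finset.sum_congr rfl fun a _ => ?_
  rw [bd_sum, qf_sum]
  refine Finset.sum_congr rfl fun i _ => ?_
  rw [bd_sum, qf_sum]
  refine Finset.sum_congr rfl fun j _ => ?_
  rw [bd_mul, bd_mul, bd_star]
  rw [← Matrix.mulVec_mulVec, ← Matrix.mulVec_mulVec]
  rw [Matrix.dotProduct_mulVec]
  have hvm : star w ᵥ* (Matrix.blockDiagonal' (ξ ⟨a, j⟩)) =
      star ((Matrix.blockDiagonal' (ξ ⟨a, j⟩))ᴴ *ᵥ w) := by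
    rw [Matrix.star_mulVec, Matrix.conjTranspose_conjTranspose]
  rw [hvm, qf2]
  rw [Finset.sum_comm]
  refine Finset.sum_congr rfl fun u _ => Finset.sum_congr rfl fun u' _ => ?_
  simp only [RingHomCompTriple.comp_apply, RingHom.id_apply, starRingEnd_self_apply,
    Complex.conj_conj]
  ring


lemma choi_to_xi (Φ : PiMat ιa da →ₗ[ℂ] PiMat ιb db) (h : (choiMat Φ).PosSemidef) :
    ∀ ξ : (Σ a, da a) → PiMat ιb db,
      (Matrix.blockDiagonal'
        (∑ a : ιa, ∑ i : da a, ∑ j : da a,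
          ξ ⟨a, j⟩ * Φ (eMat a j i) * star (ξ ⟨a, i⟩))).PosSemidef := by
  intro ξ
  apply psd_of_forall
  intro w
  rw [qxi Φ ξ w]
  exact h.dotProduct_mulVec_nonneg _

lemma xi_to_choi (Φ : PiMat ιa da →ₗ[ℂ] PiMat ιb db)
    (h : ∀ ξ : (Σ a, da a) → PiMat ιb db,
      (Matrix.blockDiagonal'
        (∑ a : ιa, ∑ i : da a, ∑ j : da a,
          ξ ⟨a, j⟩ * Φ (eMat a j i) * star (ξ ⟨a, i⟩))).PosSemidef) :
    (choiMat Φ).PosSemidef := by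
  apply psd_of_forall
  intro v
  classical
  let k0 : ∀ b, db b → db b := fun b k => Classical.choice (Nonempty.intro k)
  have hk0 : ∀ (b) (k k' : db b), k0 b k = k0 b k' := fun b k k' => rfl
  let w : (Σ b, db b) → ℂ := fun t => if t.2 = k0 t.1 t.2 then 1 else 0
  let ξ : (Σ a, da a) → PiMat ιb db := fun s b =>
    Matrix.of fun k u => if k = k0 b k then v (s, ⟨b, u⟩) else 0
  have hg : (fun su : (Σ a, da a) × (Σ b, db b) =>
      (starRingEnd ℂ) (((Matrix.blockDiagonal' (ξ su.1))ᴴ *ᵥ w) su.2)) = v := by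
    funext su
    obtain ⟨s, b, u⟩ := su
    show (starRingEnd ℂ) (∑ t, ((Matrix.blockDiagonal' (ξ s))ᴴ) ⟨b, u⟩ t * w t) = _
    rw [← sum_sigma_univ (fun t => ((Matrix.blockDiagonal' (ξ s))ᴴ) ⟨b, u⟩ t * w t)]
    rw [Finset.sum_eq_single b ?h1 (by simp)]
    · have : ∀ k : db b, ((Matrix.blockDiagonal' (ξ s))ᴴ) ⟨b, u⟩ ⟨b, k⟩ * w ⟨b, k⟩
          = if k = k0 b u then (starRingEnd ℂ) (v (s, ⟨b, u⟩)) else 0 := by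
        intro k
        rw [Matrix.conjTranspose_apply, Matrix.blockDiagonal'_apply_eq]
        show (starRingEnd ℂ) (if k = k0 b k then v (s, ⟨b, u⟩) else 0)
            * (if k = k0 b k then (1:ℂ) else 0) = _
        rw [hk0 b k u]
        split_ifs <;> simp
      rw [Finset.sum_congr rfl fun k _ => this k]
      simp
    · intro b' _ hb'
      apply Finset.sum_eq_zero
      intro k _
      rw [Matrix.conjTranspose_apply, Matrix.blockDiagonal'_apply_ne _ _ _ hb']
      simp
  rw [← hg, ← qxi Φ ξ w]
  exact (h ξ).dotProduct_mulVec_nonneg w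


/-- Generic decomposition of a big matrix built from `g` applied to a matrix of
algebra elements. -/
lemma toBig_decomp {k : Type} [Fintype k] {T' : Type}
    (Y : Matrix k k (PiMat ιa da)) (g : PiMat ιa da →ₗ[ℂ] Matrix T' T' ℂ) :
    toBig (Matrix.of fun p q => g (Y p q))
      = ∑ a, ∑ i, ∑ j, (Matrix.of fun p q => (Y p q) a i j) ⊗ₖ g (eMat a i j) := by
  ext ⟨p, t⟩ ⟨q, t'⟩
  show g (Y p q) t t' = _
  conv_lhs => rw [eq_sum_eMat (Y p q)]
  rw [map_sum]
  simp only [Matrix.sum_apply, Matrix.kroneckerMap_apply, Matrix.of_apply]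
  refine Finset.sum_congr rfl fun a _ => ?_
  rw [map_sum]
  simp only [Matrix.sum_apply]
  refine Finset.sum_congr rfl fun i _ => ?_
  rw [map_sum]
  simp only [Matrix.sum_apply]
  refine Finset.sum_congr rfl fun j _ => ?_
  rw [map_smul]
  simp only [Matrix.smul_apply, smul_eq_mul]

lemma eMat_apply_same (a : ιa) (i' j' i j : da a) :
    eMat a i' j' a i j = if i' = i ∧ j' = j then (1:ℂ) else 0 := by
  simp [eMat, Pi.single_eq_same, Matrix.single]

lemma eMat_apply_ne {a' a : ιa} (h : a' ≠ a) (i' j' : da a') :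
    eMat a' i' j' a = 0 :=
  Pi.single_eq_of_ne (Ne.symm h) _

lemma cp_to_choi (Φ : PiMat ιa da →ₗ[ℂ] PiMat ιb db) (h : IsCP Φ) :
    (choiMat Φ).PosSemidef := by
  classical
  apply psd_of_forall
  intro v
  set n := Fintype.card (Σ a, da a) with hn
  set e : Fin n ≃ (Σ a, da a) := (Fintype.equivFin _).symm with he
  set X : Matrix (Fin n) (Fin n) (PiMat ιa da) := Matrix.of fun p q =>
    ∑ a, ∑ i, ∑ j, (if ((⟨a,i⟩ : Σ a, da a) = e p ∧ (⟨a,j⟩ : Σ a, da a) = e q)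
      then (1:ℂ) else 0) • eMat a i j with hX
  have hXc : ∀ (a : ιa) (i j : da a),
      Matrix.of (fun p q : Fin n => (X p q) a i j) =
        Matrix.single (e.symm ⟨a,i⟩) (e.symm ⟨a,j⟩) (1:ℂ) := by
    intro a i j
    ext p q
    show (X p q) a i j = _
    rw [hX]
    simp only [Matrix.of_apply, Finset.sum_apply, Matrix.sum_apply, Pi.smul_apply,
      Matrix.smul_apply, smul_eq_mul]
    rw [Finset.sum_eq_single a ?ha (by simp)]
    case ha =>
      intro a' _ ha'
      apply Finset.sum_eq_zero; intro i' _
      apply Finset.sum_eq_zero; intro j' _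
      rw [eMat_apply_ne ha']
      simp
    rw [Finset.sum_eq_single i ?hi (by simp)]
    case hi =>
      intro i' _ hi'
      apply Finset.sum_eq_zero; intro j' _
      rw [eMat_apply_same]
      simp [hi']
    rw [Finset.sum_eq_single j ?hj (by simp)]
    case hj =>
      intro j' _ hj'
      rw [eMat_apply_same]
      simp [hj']
    rw [eMat_apply_same]
    simp only [and_self, if_true, mul_one]
    simp [Matrix.single, Equiv.symm_apply_eq, ite_and]
  have hmap1 : X.map (Matrix.blockDiagonal' (α := ℂ))
      = Matrix.of fun p q => (bdLin ιa da) (X p q) := rfl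
  have hmap2 : (X.map ⇑Φ).map (Matrix.blockDiagonal' (α := ℂ))
      = Matrix.of fun p q => ((bdLin ιb db).comp Φ) (X p q) := rfl
  have hbig1 : toBig (X.map (Matrix.blockDiagonal' (α := ℂ)))
      = ∑ a, ∑ i, ∑ j, Matrix.single (e.symm ⟨a,i⟩) (e.symm ⟨a,j⟩) (1:ℂ)
          ⊗ₖ Matrix.single (⟨a,i⟩ : Σ a, da a) (⟨a,j⟩ : Σ a, da a) (1:ℂ) := by
    rw [hmap1, toBig_decomp]
    refine Finset.sum_congr rfl fun a _ => Finset.sum_congr rfl fun i _ =>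
      Finset.sum_congr rfl fun j _ => ?_
    rw [hXc a i j]
    have hb : (bdLin ιa da) (eMat a i j)
        = Matrix.single (⟨a,i⟩ : Σ a, da a) (⟨a,j⟩ : Σ a, da a) (1:ℂ) := bd_eMat a i j
    rw [hb]
  have hbig2 : toBig ((X.map ⇑Φ).map (Matrix.blockDiagonal' (α := ℂ)))
      = ∑ a, ∑ i, ∑ j, Matrix.single (e.symm ⟨a,i⟩) (e.symm ⟨a,j⟩) (1:ℂ)
          ⊗ₖ Matrix.blockDiagonal' (Φ (eMat a i j)) := by
    rw [hmap2, toBig_decomp]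
    refine Finset.sum_congr rfl fun a _ => Finset.sum_congr rfl fun i _ =>
      Finset.sum_congr rfl fun j _ => ?_
    rw [hXc a i j]
    rfl
  have hin : (toBig (X.map (Matrix.blockDiagonal' (α := ℂ)))).PosSemidef := by
    apply psd_of_forall
    intro x
    rw [hbig1, qf_sum]
    have : ∀ a : ιa, star x ⬝ᵥ (∑ i, ∑ j,
        Matrix.single (e.symm ⟨a,i⟩) (e.symm ⟨a,j⟩) (1:ℂ)
          ⊗ₖ Matrix.single (⟨a,i⟩ : Σ a, da a) (⟨a,j⟩ : Σ a, da a) (1:ℂ)) *ᵥ x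
        = (starRingEnd ℂ) (∑ i, x (e.symm ⟨a,i⟩, ⟨a,i⟩)) * (∑ i, x (e.symm ⟨a,i⟩, ⟨a,i⟩)) := by
      intro a
      rw [qf_sum, map_sum, Finset.sum_mul_sum]
      refine Finset.sum_congr rfl fun i _ => ?_
      rw [qf_sum]
      refine Finset.sum_congr rfl fun j _ => ?_
      rw [qstd]
      simp only [Matrix.single, Matrix.of_apply, ite_and, mul_ite, mul_one, mul_zero,
        ite_mul, zero_mul, Finset.sum_ite_irrel, Finset.sum_const_zero, Finset.sum_ite_eq,
        Finset.mem_univ, if_true]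
    rw [Finset.sum_congr rfl fun a _ => this a]
    exact Finset.sum_nonneg fun a _ => star_mul_self_nonneg _
  have hout := h n X hin
  set w₀ : Fin n × (Σ b, db b) → ℂ := fun pt => (starRingEnd ℂ) (v (e pt.1, pt.2)) with hw₀
  have key : star v ⬝ᵥ choiMat Φ *ᵥ v
      = star w₀ ⬝ᵥ toBig ((X.map ⇑Φ).map (Matrix.blockDiagonal' (α := ℂ))) *ᵥ w₀ := by
    rw [hbig2, qchoi, qf_sum]
    refine Finset.sum_congr rfl fun a _ => ?_
    rw [qf_sum, Finset.sum_comm]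
    refine Finset.sum_congr rfl fun i _ => ?_
    rw [qf_sum]
    refine Finset.sum_congr rfl fun j _ => ?_
    rw [qstd, Finset.sum_comm]
    refine Finset.sum_congr rfl fun u _ => Finset.sum_congr rfl fun u' _ => ?_
    simp only [hw₀, Equiv.apply_symm_apply, Complex.conj_conj, starRingEnd_self_apply]
    ring
  rw [key]
  exact hout.dotProduct_mulVec_nonneg w₀


lemma qkron {S T : Type} [Fintype S] [Fintype T] (A : Matrix S S ℂ) (N : Matrix T T ℂ)
    (v : S × T → ℂ) :
    star v ⬝ᵥ (A ⊗ₖ N) *ᵥ v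
      = ∑ p, ∑ u, ∑ q, ∑ u', (starRingEnd ℂ) (v (p,u)) * A p q * N u u' * v (q,u') := by
  rw [qf_expand, Fintype.sum_prod_type]
  refine Finset.sum_congr rfl fun p _ => Finset.sum_congr rfl fun u _ => ?_
  rw [Fintype.sum_prod_type]
  refine Finset.sum_congr rfl fun q _ => Finset.sum_congr rfl fun u' _ => ?_
  show _ * (A p q * N u u') * _ = _
  ring

lemma choi_to_cp (Φ : PiMat ιa da →ₗ[ℂ] PiMat ιb db) (hC : (choiMat Φ).PosSemidef) :
    IsCP Φ := by
  intro n X hX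
  open scoped MatrixOrder in
  obtain ⟨B, hB⟩ := CStarAlgebra.nonneg_iff_eq_star_mul_self.mp hX.nonneg
  rw [Matrix.star_eq_conjTranspose] at hB
  apply psd_of_forall
  intro w
  have hmap2 : (X.map ⇑Φ).map (Matrix.blockDiagonal' (α := ℂ))
      = Matrix.of fun p q => ((bdLin ιb db).comp Φ) (X p q) := rfl
  have hcoef : ∀ (p q : Fin n) (a : ιa) (i j : da a),
      (X p q) a i j = ∑ r : Fin n × (Σ a, da a),
        (starRingEnd ℂ) (B r (p, ⟨a,i⟩)) * B r (q, ⟨a,j⟩) := by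
    intro p q a i j
    have h0 : toBig (X.map (Matrix.blockDiagonal' (α := ℂ))) (p, ⟨a,i⟩) (q, ⟨a,j⟩)
        = (Bᴴ * B) (p, ⟨a,i⟩) (q, ⟨a,j⟩) := by rw [← hB]
    rw [show toBig (X.map (Matrix.blockDiagonal' (α := ℂ))) (p, ⟨a,i⟩) (q, ⟨a,j⟩)
        = (X p q) a i j from Matrix.blockDiagonal'_apply_eq (X p q) a i j] at h0
    rw [h0, Matrix.mul_apply]
    simp [Matrix.conjTranspose_apply]
  have key : star w ⬝ᵥ toBig ((X.map ⇑Φ).map (Matrix.blockDiagonal' (α := ℂ))) *ᵥ w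
      = ∑ r : Fin n × (Σ a, da a),
          star (fun su : (Σ a, da a) × (Σ b, db b) =>
            (starRingEnd ℂ) (∑ p, B r (p, su.1) * w (p, su.2))) ⬝ᵥ choiMat Φ *ᵥ
          (fun su : (Σ a, da a) × (Σ b, db b) =>
            (starRingEnd ℂ) (∑ p, B r (p, su.1) * w (p, su.2))) := by
    rw [hmap2, toBig_decomp]
    conv_rhs => enter [2, r]; rw [qchoi]
    simp only [map_sum, map_mul, Complex.conj_conj]
    conv_lhs => rw [qf_sum]
    conv_lhs => enter [2, a]; rw [qf_sum]
    conv_lhs => enter [2, a, 2, i]; rw [qf_sum]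
    conv_lhs => enter [2, a, 2, i, 2, j]; rw [qkron]
    simp only [Matrix.of_apply, LinearMap.comp_apply, bdLin_apply]
    simp only [hcoef]
    simp only [Finset.mul_sum, Finset.sum_mul]
    -- LHS order: a i j p t q t' r  →  r a i j t t' p q
    conv_lhs => enter [2, a, 2, i, 2, j, 2, p, 2, t, 2, q]; rw [Finset.sum_comm]
    conv_lhs => enter [2, a, 2, i, 2, j, 2, p, 2, t]; rw [Finset.sum_comm]
    conv_lhs => enter [2, a, 2, i, 2, j, 2, p]; rw [Finset.sum_comm]
    conv_lhs => enter [2, a, 2, i, 2, j]; rw [Finset.sum_comm]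
    conv_lhs => enter [2, a, 2, i]; rw [Finset.sum_comm]
    conv_lhs => enter [2, a]; rw [Finset.sum_comm]
    conv_lhs => rw [Finset.sum_comm]
    -- now LHS: r a i j p t q t'
    conv_lhs => enter [2, r, 2, a, 2, i, 2, j]; rw [Finset.sum_comm]
    -- r a i j t p q t'
    conv_lhs => enter [2, r, 2, a, 2, i, 2, j, 2, t, 2, p]; rw [Finset.sum_comm]
    -- r a i j t p t' q
    conv_lhs => enter [2, r, 2, a, 2, i, 2, j, 2, t]; rw [Finset.sum_comm]
    -- r a i j t t' p q
    -- RHS order: r a i j u u' q p → swap i,j then u,u' then q,p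
    conv_rhs => enter [2, r, 2, a]; rw [Finset.sum_comm]
    conv_rhs => enter [2, r, 2, a, 2, i, 2, j]; rw [Finset.sum_comm]
    refine Finset.sum_congr rfl fun r _ => Finset.sum_congr rfl fun a _ =>
      Finset.sum_congr rfl fun i _ => Finset.sum_congr rfl fun j _ =>
      Finset.sum_congr rfl fun t _ => Finset.sum_congr rfl fun t' _ =>
      Finset.sum_congr rfl fun p _ => Finset.sum_congr rfl fun q _ => ?_
    ring
  rw [key]
  exact Finset.sum_nonneg fun r _ => hC.dotProduct_mulVec_nonneg _

theorem stmt0 (Φ : PiMat ιa da →ₗ[ℂ] PiMat ιb db) :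
    (IsCP Φ ↔ (choiMat Φ).PosSemidef) ∧
    (IsCP Φ ↔ ∀ ξ : (Σ a, da a) → PiMat ιb db,
      (Matrix.blockDiagonal'
        (∑ a : ιa, ∑ i : da a, ∑ j : da a,
          ξ ⟨a, j⟩ * Φ (eMat a j i) * star (ξ ⟨a, i⟩))).PosSemidef) := by
  constructor
  · exact ⟨cp_to_choi Φ, choi_to_cp Φ⟩
  · exact ⟨fun h => choi_to_xi Φ (cp_to_choi Φ h), fun h => choi_to_cp Φ (xi_to_choi Φ h)⟩

end Stmt0
end

section
/- Let Φ : I → O be a quantum channel and let (E, W) be a Stinespring module related to Φ. Regard E as a Hilbert space with inner product ⟨ξ,η⟩_tr = tr(⟨ξ,η⟩_{O^op}), define π : O → B(E) by π(x)(ξ) = ξ * x (right O^op-multiplication by x), and define V : H_in → E by V(η) = W(η ⊗ 1). Then (π, V, E) is a Stinespring representation of the UCP map Φ* : O → B(H_in), i.e. V*π(x)V = Φ*(x) for all x ∈ O. Moreover, if (E, W) is minimal then this Stinespring representation is minimal. -/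
/-!
STATEMENT 3: Let `Φ : I → O` be a quantum channel and `(E, W)` a Stinespring module
related to `Φ`.  Regarding `E` as a Hilbert space with inner product `tr⟨·,·⟩_{O^op}`,
with `π : O → B(E)`, `π(x)ξ = ξ * x` the right `O^op`-multiplication (encoded as the
*-representation `ρ` of `O` on `E`) and `V : H_in → E`, `V(η) = W(η ⊗ 1)`, the triple
`(π, V, E)` is a Stinespring representation of the UCP map `Φ* : O → B(H_in)`, i.e.
`V* π(x) V = Φ*(x)` for all `x ∈ O` (stated by testing against all vectors, where
`Φ*` is the Hilbert–Schmidt adjoint `Ψ` of `Φ`, acting on `H_in` through the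
block-diagonal representation of `I`).  Moreover, if `(E, W)` is minimal (dense range)
then this Stinespring representation is minimal
(`span{π(T) V ξ : T ∈ O, ξ ∈ H_in}` is dense in `E`).

Encoding of Stinespring modules as in the other files: a Hilbert space `E` with a
unital *-representation `ρ` of `O` and an intertwining map `W` with Gram matrix `C_Φ`.
-/

open scoped ComplexOrder Kronecker Matrix

local notation "⟪" x ", " y "⟫_ℂ" => @inner ℂ _ _ x y

namespace Stmt3

abbrev PiMat (ι : Type) (d : ι → Type) [∀ i, Fintype (d i)] : Type _ :=
  ∀ i, Matrix (d i) (d i) ℂ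

def toBig {k d : Type} (X : Matrix k k (Matrix d d ℂ)) : Matrix (k × d) (k × d) ℂ :=
  Matrix.of fun p q => X p.1 q.1 p.2 q.2

variable {ιa ιb : Type} [Fintype ιa] [DecidableEq ιa] [Fintype ιb] [DecidableEq ιb]
  {da : ιa → Type} [∀ a, Fintype (da a)] [∀ a, DecidableEq (da a)]
  {db : ιb → Type} [∀ b, Fintype (db b)] [∀ b, DecidableEq (db b)]

def eMat (a : ιa) (i j : da a) : PiMat ιa da :=
  Pi.single a (Matrix.single i j 1)

def IsCP (Φ : PiMat ιa da →ₗ[ℂ] PiMat ιb db) : Prop :=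
  ∀ (n : ℕ) (X : Matrix (Fin n) (Fin n) (PiMat ιa da)),
    (toBig (X.map (Matrix.blockDiagonal' (α := ℂ)))).PosSemidef →
    (toBig ((X.map ⇑Φ).map (Matrix.blockDiagonal' (α := ℂ)))).PosSemidef

noncomputable def trPi {ι : Type} [Fintype ι] {d : ι → Type} [∀ i, Fintype (d i)]
    (x : PiMat ι d) : ℂ :=
  ∑ i, (x i).trace

/-- Right multiplication by `y ∈ O^op` on the Hilbert–Schmidt space of `O`. -/
def RmatO (y : PiMat ιb db) :
    Matrix (Σ b, db b × db b) (Σ b, db b × db b) ℂ :=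
  Matrix.blockDiagonal' fun b => Matrix.of fun pq pq' : db b × db b =>
    if pq.1 = pq'.1 then y b pq'.2 pq.2 else 0

/-- Left multiplication by `y ∈ O` on the Hilbert–Schmidt space of `O`. -/
def LmatO (y : PiMat ιb db) :
    Matrix (Σ b, db b × db b) (Σ b, db b × db b) ℂ :=
  Matrix.blockDiagonal' fun b => Matrix.of fun pq pq' : db b × db b =>
    if pq.2 = pq'.2 then y b pq.1 pq'.1 else 0

/-- The right `O^op`-module action on `M_Φ = H_in ⊗ O^op`. -/
def actOMat (x : PiMat ιb db) :
    Matrix ((Σ a, da a) × Σ b, db b × db b) ((Σ a, da a) × Σ b, db b × db b) ℂ :=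
  (1 : Matrix (Σ a, da a) (Σ a, da a) ℂ) ⊗ₖ LmatO x

/-- The Choi-type invariant `C_Φ = Σ_{i,j,a} e^a_{ij} ⊗ Φ(e^a_{ji})`, as an operator
on the module `M_Φ`. -/
noncomputable def CMat (Φ : PiMat ιa da →ₗ[ℂ] PiMat ιb db) :
    Matrix ((Σ a, da a) × Σ b, db b × db b) ((Σ a, da a) × Σ b, db b × db b) ℂ :=
  ∑ a : ιa, ∑ i : da a, ∑ j : da a,
    Matrix.single (⟨a, i⟩ : Σ a, da a) (⟨a, j⟩ : Σ a, da a) (1 : ℂ) ⊗ₖ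
      RmatO (Φ (eMat a j i))

/-- The Hilbert–Schmidt inner product on a multimatrix algebra. -/
noncomputable def innerPi {ι : Type} [Fintype ι] {d : ι → Type} [∀ i, Fintype (d i)]
    (x y : PiMat ι d) : ℂ :=
  ∑ i, ((x i)ᴴ * y i).trace

/-- The matrix of the isometry `i : H_in → M_Φ`, `ξ ↦ ξ ⊗ 1`. -/
def embedMat : Matrix ((Σ a, da a) × Σ b, db b × db b) (Σ a, da a) ℂ :=
  Matrix.of fun p i => if p.1 = i ∧ p.2.2.1 = p.2.2.2 then 1 else 0

/-- `i : H_in → M_Φ` as a continuous linear map of Euclidean spaces. -/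
noncomputable def embedCLM :
    EuclideanSpace ℂ (Σ a, da a) →L[ℂ]
      EuclideanSpace ℂ ((Σ a, da a) × Σ b, db b × db b) :=
  LinearMap.toContinuousLinearMap (Matrix.toEuclideanLin (embedMat (da := da) (db := db)))
lemma actO_mul_embed_apply (x : PiMat ιb db)
    (r : (Σ a, da a) × Σ b, db b × db b) (c : Σ a, da a) :
    (actOMat (da := da) x * embedMat (da := da) (db := db)) r c =
      if r.1 = c then x r.2.1 r.2.2.1 r.2.2.2 else 0 := by
  obtain ⟨s, b, p, q⟩ := r
  rw [Matrix.mul_apply, Fintype.sum_prod_type]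
  rw [Finset.sum_eq_single c (fun s' _ hs' => Finset.sum_eq_zero fun t _ => by
    simp [embedMat, hs']) (by simp)]
  rw [← Finset.univ_sigma_univ, Finset.sum_sigma]
  rw [Finset.sum_eq_single b (fun b' _ hb' => Finset.sum_eq_zero fun uv _ => by
    simp [actOMat, LmatO, Matrix.blockDiagonal'_apply_ne _ _ _ (Ne.symm hb')]) (by simp)]
  rw [Fintype.sum_prod_type]
  simp [actOMat, embedMat, LmatO, Matrix.one_apply, mul_comm]


lemma CMat_apply (Φ : PiMat ιa da →ₗ[ℂ] PiMat ιb db) (a : ιa) (i : da a)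
    (t : Σ b, db b × db b) (m : (Σ a, da a) × Σ b, db b × db b) :
    CMat Φ (⟨a, i⟩, t) m =
      ∑ l : da a, (if (⟨a, l⟩ : Σ a, da a) = m.1 then 1 else 0) *
        RmatO (Φ (eMat a l i)) t m.2 := by
  rw [CMat, Matrix.sum_apply]
  rw [Finset.sum_eq_single a (fun a₂ _ ha₂ => by
    rw [Matrix.sum_apply]
    apply Finset.sum_eq_zero; intro k _
    rw [Matrix.sum_apply]
    apply Finset.sum_eq_zero; intro k' _
    have : (⟨a₂, k⟩ : Σ a, da a) ≠ ⟨a, i⟩ := by simp [ha₂]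
    simp [Matrix.kroneckerMap_apply, Matrix.single, this]) (by simp)]
  rw [Matrix.sum_apply]
  rw [Finset.sum_eq_single i (fun k _ hk => by
    rw [Matrix.sum_apply]
    apply Finset.sum_eq_zero; intro k' _
    simp [Matrix.kroneckerMap_apply, Matrix.single, hk]) (by simp)]
  rw [Matrix.sum_apply]
  apply Finset.sum_congr rfl; intro l _
  simp [Matrix.kroneckerMap_apply, Matrix.single, eq_comm]


lemma RmatO_apply_eq (y : PiMat ιb db) (b : ιb) (pq uv : db b × db b) :
    RmatO y ⟨b, pq⟩ ⟨b, uv⟩ = if pq.1 = uv.1 then y b uv.2 pq.2 else 0 :=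
  Matrix.blockDiagonal'_apply_eq _ _ _ _

lemma RmatO_apply_ne (y : PiMat ιb db) {b b' : ιb} (h : b ≠ b')
    (pq : db b × db b) (uv : db b' × db b') :
    RmatO y ⟨b, pq⟩ ⟨b', uv⟩ = 0 :=
  Matrix.blockDiagonal'_apply_ne _ _ _ h

lemma CP_apply (Φ : PiMat ιa da →ₗ[ℂ] PiMat ιb db) (x : PiMat ιb db)
    (a : ιa) (i : da a) (b : ιb) (p q : db b) (c : Σ a, da a) :
    (CMat Φ * (actOMat (da := da) x * embedMat (da := da) (db := db)))
        (⟨a, i⟩, ⟨b, (p, q)⟩) c =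
      ∑ l : da a, (if (⟨a, l⟩ : Σ a, da a) = c then 1 else 0) *
        ∑ v : db b, x b p v * Φ (eMat a l i) b v q := by
  rw [Matrix.mul_apply]
  simp_rw [CMat_apply, actO_mul_embed_apply]
  rw [Fintype.sum_prod_type]
  rw [Finset.sum_eq_single c (fun m1 _ hm1 => by
    apply Finset.sum_eq_zero; intro t _; simp [hm1]) (by simp)]
  rw [← Finset.univ_sigma_univ, Finset.sum_sigma]
  rw [Finset.sum_eq_single b (fun b' _ hb' => Finset.sum_eq_zero fun uv _ => by
    simp [RmatO_apply_ne _ (Ne.symm hb')]) (by simp)]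
  rw [Fintype.sum_prod_type]
  simp_rw [RmatO_apply_eq]
  rw [Finset.sum_eq_single p (fun u _ hu => Finset.sum_eq_zero fun v _ => by
    simp [Ne.symm hu]) (by simp)]
  simp only [if_pos rfl, if_true]
  simp_rw [Finset.sum_mul]
  rw [Finset.sum_comm]
  apply Finset.sum_congr rfl; intro l _
  rw [Finset.mul_sum]
  exact Finset.sum_congr rfl fun v _ => by ring


lemma CP_apply' (Φ : PiMat ιa da →ₗ[ℂ] PiMat ιb db) (x : PiMat ιb db)
    (a : ιa) (i : da a) (b : ιb) (pq : db b × db b) (c : Σ a, da a) :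
    (CMat Φ * (actOMat (da := da) x * embedMat (da := da) (db := db)))
        (⟨a, i⟩, ⟨b, pq⟩) c =
      ∑ l : da a, (if (⟨a, l⟩ : Σ a, da a) = c then 1 else 0) *
        ∑ v : db b, x b pq.1 v * Φ (eMat a l i) b v pq.2 := CP_apply Φ x a i b pq.1 pq.2 c

lemma blockDiagonal'_apply_sum (M : PiMat ιa da) (a : ιa) (i : da a) (c : Σ a, da a) :
    Matrix.blockDiagonal' M ⟨a, i⟩ c =
      ∑ l : da a, (if (⟨a, l⟩ : Σ a, da a) = c then 1 else 0) * M a i l := by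
  obtain ⟨a', j⟩ := c
  rcases eq_or_ne a a' with rfl | h
  · simp [Matrix.blockDiagonal'_apply_eq]
  · rw [Matrix.blockDiagonal'_apply_ne _ _ _ h]
    exact (Finset.sum_eq_zero fun l _ => by simp [h]).symm

lemma ite_sum {κ : Type*} {P : Prop} [Decidable P] {s : Finset κ} (f : κ → ℂ) :
    (if P then ∑ k ∈ s, f k else 0) = ∑ k ∈ s, if P then f k else 0 := by
  split <;> simp

lemma key (Φ : PiMat ιa da →ₗ[ℂ] PiMat ιb db) (x : PiMat ιb db) (Ψx : PiMat ιa da)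
    (hx : ∀ (a : ιa) (i j : da a), Ψx a i j = ∑ b, ((x b) * (Φ (eMat a j i)) b).trace) :
    (embedMat (da := da) (db := db))ᴴ *
        (CMat Φ * (actOMat (da := da) x * embedMat (da := da) (db := db))) =
      Matrix.blockDiagonal' Ψx := by
  ext ⟨a, i⟩ c
  rw [Matrix.mul_apply, Fintype.sum_prod_type]
  rw [Finset.sum_eq_single (⟨a, i⟩ : Σ a, da a) (fun m1 _ hm1 => Finset.sum_eq_zero fun t _ => by
      simp [Matrix.conjTranspose_apply, embedMat, hm1]) (by simp)]
  rw [← Finset.univ_sigma_univ, Finset.sum_sigma]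
  rw [blockDiagonal'_apply_sum]
  simp_rw [hx, CP_apply', Matrix.conjTranspose_apply, embedMat, Matrix.trace,
    Matrix.diag, Matrix.mul_apply]
  simp only [Matrix.of_apply, eq_self_iff_true, true_and, apply_ite (star : ℂ → ℂ),
    star_one, star_zero]
  simp_rw [Fintype.sum_prod_type, ite_mul, one_mul, zero_mul, Finset.sum_ite_eq,
    Finset.mem_univ, if_true, ite_sum]
  conv_rhs => rw [Finset.sum_comm]
  exact Finset.sum_congr rfl fun b _ => Finset.sum_comm


lemma trace_conjTranspose_mul_stdBasis {n : Type} [Fintype n] [DecidableEq n]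
    (A : Matrix n n ℂ) (i j : n) :
    (Aᴴ * Matrix.single i j 1).trace = star (A i j) := by
  simp [Matrix.trace, Matrix.diag, Matrix.mul_apply, Matrix.single,
    Matrix.conjTranspose_apply, ite_and, Finset.sum_ite_eq, Finset.sum_ite_eq']

lemma CMat_single (Φ : PiMat ιa da →ₗ[ℂ] PiMat ιb db) (a : ιa) (i j : da a)
    (b : ιb) (p q v : db b) :
    CMat Φ (⟨a, i⟩, ⟨b, (p, q)⟩) (⟨a, j⟩, ⟨b, (p, v)⟩) = Φ (eMat a j i) b v q := by
  rw [CMat_apply]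
  rw [Finset.sum_eq_single j (fun l _ hl => by simp [hl]) (by simp)]
  simp [RmatO_apply_eq]



theorem stmt3
    (Φ : PiMat ιa da →ₗ[ℂ] PiMat ιb db) (hCP : IsCP Φ)
    (hTP : ∀ x : PiMat ιa da, trPi (Φ x) = trPi x)
    (E : Type) [NormedAddCommGroup E] [InnerProductSpace ℂ E] [CompleteSpace E]
    (ρ : PiMat ιb db →⋆ₐ[ℂ] (E →L[ℂ] E))
    (W : EuclideanSpace ℂ ((Σ a, da a) × Σ b, db b × db b) →L[ℂ] E)
    (hW₁ : ∀ (x : PiMat ιb db) ξ,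
      W (Matrix.toEuclideanCLM (𝕜 := ℂ) (actOMat (da := da) x) ξ) = ρ x (W ξ))
    (hW₂ : ∀ ξ η, ⟪W ξ, W η⟫_ℂ = ⟪ξ, Matrix.toEuclideanCLM (𝕜 := ℂ) (CMat Φ) η⟫_ℂ)
    (Ψ : PiMat ιb db →ₗ[ℂ] PiMat ιa da)
    (hΨ : ∀ (x : PiMat ιb db) (y : PiMat ιa da), innerPi (Ψ x) y = innerPi x (Φ y)) :
    (∀ (x : PiMat ιb db) (ξ η : EuclideanSpace ℂ (Σ a, da a)),
        ⟪W (embedCLM (da := da) (db := db) ξ), ρ x (W (embedCLM (da := da) (db := db) η))⟫_ℂ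
          = ⟪ξ, Matrix.toEuclideanCLM (𝕜 := ℂ) (Matrix.blockDiagonal' (Ψ x)) η⟫_ℂ) ∧
    (DenseRange ⇑W →
      Dense (↑(Submodule.span ℂ
        (Set.range fun p : PiMat ιb db × EuclideanSpace ℂ (Σ a, da a) =>
          ρ p.1 (W (embedCLM (da := da) (db := db) p.2)))) : Set E)) := by
  classical
  have hCE : ∀ r m, CMat Φ r m =
      ⟪(EuclideanSpace.single r (1 : ℂ) :
          EuclideanSpace ℂ ((Σ a, da a) × Σ b, db b × db b)),
        Matrix.toEuclideanCLM (𝕜 := ℂ) (CMat Φ) (EuclideanSpace.single m 1)⟫_ℂ := by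
    intro r m
    rw [EuclideanSpace.inner_single_left]
    have : (Matrix.toEuclideanCLM (𝕜 := ℂ) (CMat Φ) (EuclideanSpace.single m 1)) r
        = (CMat Φ *ᵥ (Pi.single m 1)) r := rfl
    rw [this]
    simp [Matrix.mulVec, dotProduct, Pi.single_apply]
  have hC : ∀ r m, CMat Φ r m = star (CMat Φ m r) := by
    intro r m
    rw [hCE r m, hCE m r, ← hW₂, ← hW₂, ← inner_conj_symm]
    rfl
  have hherm : ∀ (a : ιa) (i j : da a), Φ (eMat a j i) = star (Φ (eMat a i j)) := by
    intro a i j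
    funext b
    ext v q
    have h := hC (⟨a, i⟩, ⟨b, (v, q)⟩) (⟨a, j⟩, ⟨b, (v, v)⟩)
    rw [CMat_single, CMat_single] at h
    simpa using h
  have hΨe : ∀ (x : PiMat ιb db) (a : ιa) (i j : da a),
      Ψ x a i j = ∑ b, ((x b) * (Φ (eMat a j i)) b).trace := by
    intro x a i j
    have h := hΨ x (eMat a i j)
    rw [innerPi, innerPi] at h
    rw [Finset.sum_eq_single a (fun a' _ ha' => by
        simp [eMat, Pi.single_eq_of_ne ha']) (by simp)] at h
    have he : eMat a i j a = Matrix.single i j 1 := Pi.single_eq_same _ _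
    rw [he, trace_conjTranspose_mul_stdBasis] at h
    have h2 := congrArg star h
    rw [star_star] at h2
    rw [h2, star_sum]
    refine Finset.sum_congr rfl fun b _ => ?_
    rw [← Matrix.trace_conjTranspose, Matrix.conjTranspose_mul,
      Matrix.conjTranspose_conjTranspose]
    have hb : (Φ (eMat a i j) b)ᴴ = Φ (eMat a j i) b := by
      rw [hherm a i j]; rfl
    rw [hb, Matrix.trace_mul_comm]
  have hkey : ∀ x : PiMat ιb db,
      (embedMat (da := da) (db := db))ᴴ *
        (CMat Φ * (actOMat (da := da) x * embedMat (da := da) (db := db))) =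
      Matrix.blockDiagonal' (Ψ x) := fun x => key Φ x (Ψ x) (hΨe x)
  refine ⟨?_, ?_⟩
  · intro x ξ η
    rw [← hW₁, hW₂]
    have lhs_eq : ⟪embedCLM (da := da) (db := db) ξ,
        Matrix.toEuclideanCLM (𝕜 := ℂ) (CMat Φ)
          (Matrix.toEuclideanCLM (𝕜 := ℂ) (actOMat (da := da) x)
            (embedCLM (da := da) (db := db) η))⟫_ℂ
        = dotProduct (star (ξ : (Σ a, da a) → ℂ))
            (((embedMat (da := da) (db := db))ᴴ *
              (CMat Φ * (actOMat (da := da) x * embedMat (da := da) (db := db)))) *ᵥ η) := by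
      rw [EuclideanSpace.inner_eq_star_dotProduct, dotProduct_comm]
      show dotProduct (star (embedMat (da := da) (db := db) *ᵥ ξ))
          (CMat Φ *ᵥ (actOMat (da := da) x *ᵥ (embedMat (da := da) (db := db) *ᵥ η))) = _
      rw [Matrix.star_mulVec, ← Matrix.dotProduct_mulVec,
        Matrix.mulVec_mulVec, Matrix.mulVec_mulVec, Matrix.mulVec_mulVec,
        Matrix.mul_assoc, Matrix.mul_assoc]
    rw [lhs_eq, hkey x, EuclideanSpace.inner_eq_star_dotProduct, dotProduct_comm]
    rfl
  · intro hd
    refine Dense.mono ?_ hd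
    rintro _ ⟨v, rfl⟩
    have hv := ((EuclideanSpace.basisFun
      (((Σ a, da a) × Σ b, db b × db b)) ℂ).sum_repr v).symm
    simp only [EuclideanSpace.basisFun_apply, EuclideanSpace.basisFun_repr] at hv
    rw [hv, map_sum]
    apply Submodule.sum_mem
    intro r _
    rw [map_smul]
    apply Submodule.smul_mem
    obtain ⟨⟨a, i⟩, ⟨b, p, q⟩⟩ := r
    have hsingle : (EuclideanSpace.single
          ((⟨⟨a, i⟩, ⟨b, (p, q)⟩⟩ : (Σ a, da a) × Σ b, db b × db b)) (1 : ℂ)) =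
        Matrix.toEuclideanCLM (𝕜 := ℂ) (actOMat (da := da) (eMat b p q))
          (embedCLM (da := da) (db := db) (EuclideanSpace.single ⟨a, i⟩ 1)) := by
      ext r'
      have h1 : (Matrix.toEuclideanCLM (𝕜 := ℂ) (actOMat (da := da) (eMat b p q))
          (embedCLM (da := da) (db := db) (EuclideanSpace.single ⟨a, i⟩ 1))) r'
          = ((actOMat (da := da) (eMat b p q) * embedMat (da := da) (db := db)) *ᵥ
              (Pi.single (⟨a, i⟩ : Σ a, da a) 1)) r' := by
        show (actOMat (da := da) (eMat b p q) *ᵥ (embedMat (da := da) (db := db) *ᵥ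
          (Pi.single (⟨a, i⟩ : Σ a, da a) 1))) r' = _
        rw [Matrix.mulVec_mulVec]
      rw [h1, Matrix.mulVec_single]
      simp only [Pi.smul_apply, MulOpposite.op_one, one_smul, Matrix.col_apply]
      rw [actO_mul_embed_apply]
      obtain ⟨m1, ⟨b', u', v'⟩⟩ := r'
      rcases eq_or_ne b' b with rfl | hb'
      · by_cases hm : m1 = (⟨a, i⟩ : Σ a, da a) <;>
          by_cases huv : u' = p ∧ v' = q <;>
          simp [eMat, EuclideanSpace.single_apply, Matrix.single, Prod.ext_iff,
            hm, huv, and_comm, and_assoc, and_left_comm, eq_comm]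
      · simp [eMat, EuclideanSpace.single_apply, Pi.single_eq_of_ne hb', Prod.ext_iff, hb']
    rw [hsingle, hW₁]
    exact Submodule.subset_span
      ⟨(eMat b p q, EuclideanSpace.single ⟨a, i⟩ 1), rfl⟩

end Stmt3
end

section
/- Let Φ : I → O be a quantum channel and let (E, W) and (E', W') be two Stinespring modules related to Φ. Then W* L(E) W = W'* L(E') W' as subspaces of L(M_Φ), where L(E) and L(E') denote the algebras of adjointable O^op-linear operators on E and E' respectively. Consequently the quantum confusability multigraph S̃_Φ = W* L(E) W ⊆ L(M_Φ) ≅ B(H_in) ⊗ O^op is independent of the choice of Stinespring module. -/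
/-!
STATEMENT 4: Let `Φ : I → O` be a quantum channel (trace-preserving completely positive
map between `I = ⊕_a B(H^a_in)` and `O = ⊕_b B(H^b_out)`), and let `(E, W)` and
`(E', W')` be two Stinespring modules related to `Φ`.  Then
`W* L(E) W = W'* L(E') W'` as subsets of `L(M_Φ) ≅ B(H_in) ⊗ O^op`; consequently the
quantum confusability multigraph `S̃_Φ = W* L(E) W` is independent of the choice of
Stinespring module.

Encoding: a (right Hilbert-`O^op`-module, `O^op` finite dimensional) is equivalently a
Hilbert space `E` together with a unital *-representation `ρ` of `O` on `E` (the right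
`O^op`-action); the module `M_Φ = H_in ⊗ O^op` (with Hilbert structure
`tr⟨·,·⟩_{O^op}`) is the Euclidean space indexed by `H_in-basis × HS-basis of O`, with
`O`-action `actOMat` (left multiplication on the `O`-factor); an adjointable operator
`W ∈ L(M_Φ, E)` with `W*W = C_Φ` is a continuous linear map intertwining the actions
and satisfying the Gram identity `⟨Wξ, Wη⟩ = ⟨ξ, C_Φ η⟩`; and
`L(E) = ρ(O)' = {T : T ρ(x) = ρ(x) T}`, `W* T W` being the Hilbert-space composition.
-/

open scoped ComplexOrder Kronecker Matrix

local notation "⟪" x ", " y "⟫_ℂ" => @inner ℂ _ _ x y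

namespace Stmt4

abbrev PiMat (ι : Type) (d : ι → Type) [∀ i, Fintype (d i)] : Type _ :=
  ∀ i, Matrix (d i) (d i) ℂ

def toBig {k d : Type} (X : Matrix k k (Matrix d d ℂ)) : Matrix (k × d) (k × d) ℂ :=
  Matrix.of fun p q => X p.1 q.1 p.2 q.2

variable {ιa ιb : Type} [Fintype ιa] [DecidableEq ιa] [Fintype ιb] [DecidableEq ιb]
  {da : ιa → Type} [∀ a, Fintype (da a)] [∀ a, DecidableEq (da a)]
  {db : ιb → Type} [∀ b, Fintype (db b)] [∀ b, DecidableEq (db b)]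

def eMat (a : ιa) (i j : da a) : PiMat ιa da :=
  Pi.single a (Matrix.single i j 1)

def IsCP (Φ : PiMat ιa da →ₗ[ℂ] PiMat ιb db) : Prop :=
  ∀ (n : ℕ) (X : Matrix (Fin n) (Fin n) (PiMat ιa da)),
    (toBig (X.map (Matrix.blockDiagonal' (α := ℂ)))).PosSemidef →
    (toBig ((X.map ⇑Φ).map (Matrix.blockDiagonal' (α := ℂ)))).PosSemidef

noncomputable def trPi {ι : Type} [Fintype ι] {d : ι → Type} [∀ i, Fintype (d i)]
    (x : PiMat ι d) : ℂ :=
  ∑ i, (x i).trace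

/-- Right multiplication by `y ∈ O^op` on the Hilbert–Schmidt space of `O`. -/
def RmatO (y : PiMat ιb db) :
    Matrix (Σ b, db b × db b) (Σ b, db b × db b) ℂ :=
  Matrix.blockDiagonal' fun b => Matrix.of fun pq pq' : db b × db b =>
    if pq.1 = pq'.1 then y b pq'.2 pq.2 else 0

/-- Left multiplication by `y ∈ O` on the Hilbert–Schmidt space of `O`. -/
def LmatO (y : PiMat ιb db) :
    Matrix (Σ b, db b × db b) (Σ b, db b × db b) ℂ :=
  Matrix.blockDiagonal' fun b => Matrix.of fun pq pq' : db b × db b =>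
    if pq.2 = pq'.2 then y b pq.1 pq'.1 else 0

/-- The right `O^op`-module action on `M_Φ = H_in ⊗ O^op`. -/
def actOMat (x : PiMat ιb db) :
    Matrix ((Σ a, da a) × Σ b, db b × db b) ((Σ a, da a) × Σ b, db b × db b) ℂ :=
  (1 : Matrix (Σ a, da a) (Σ a, da a) ℂ) ⊗ₖ LmatO x

/-- The Choi-type invariant `C_Φ = Σ_{i,j,a} e^a_{ij} ⊗ Φ(e^a_{ji})`, as an operator
on the module `M_Φ`. -/
noncomputable def CMat (Φ : PiMat ιa da →ₗ[ℂ] PiMat ιb db) :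
    Matrix ((Σ a, da a) × Σ b, db b × db b) ((Σ a, da a) × Σ b, db b × db b) ℂ :=
  ∑ a : ιa, ∑ i : da a, ∑ j : da a,
    Matrix.single (⟨a, i⟩ : Σ a, da a) (⟨a, j⟩ : Σ a, da a) (1 : ℂ) ⊗ₖ
      RmatO (Φ (eMat a j i))

open ContinuousLinearMap in
/-- Abstract one-directional transfer lemma: if `W, W'` have equal Gram forms and both
intertwine a common action `π` on the (finite-dimensional) source with representations
`ρ, ρ'`, then every `T` in the commutant of `ρ` yields `T'` in the commutant of `ρ'`
with `W'* T' W' = W* T W`. -/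
lemma key {M E E' : Type*} [NormedAddCommGroup M] [InnerProductSpace ℂ M]
    [FiniteDimensional ℂ M]
    [NormedAddCommGroup E] [InnerProductSpace ℂ E] [CompleteSpace E]
    [NormedAddCommGroup E'] [InnerProductSpace ℂ E'] [CompleteSpace E']
    {G : Type*} [Star G]
    (π : G → M →L[ℂ] M) (ρ : G → E →L[ℂ] E) (ρ' : G → E' →L[ℂ] E')
    (hρ : ∀ x, adjoint (ρ x) = ρ (star x)) (hρ' : ∀ x, adjoint (ρ' x) = ρ' (star x))
    (W : M →L[ℂ] E) (W' : M →L[ℂ] E')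
    (hWa : ∀ x ξ, W (π x ξ) = ρ x (W ξ))
    (hWa' : ∀ x ξ, W' (π x ξ) = ρ' x (W' ξ))
    (hG : ∀ ξ η, ⟪W ξ, W η⟫_ℂ = ⟪W' ξ, W' η⟫_ℂ)
    (T : E →L[ℂ] E) (hT : ∀ x, T ∘L ρ x = ρ x ∘L T) :
    ∃ T' : E' →L[ℂ] E', (∀ x, T' ∘L ρ' x = ρ' x ∘L T') ∧
      adjoint W' ∘L T' ∘L W' = adjoint W ∘L T ∘L W := by
  classical
  -- kernel inclusion
  have hker : LinearMap.ker (W : M →ₗ[ℂ] E) ≤ LinearMap.ker (W' : M →ₗ[ℂ] E') := by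
    intro ξ hξ
    simp only [LinearMap.mem_ker, ContinuousLinearMap.coe_coe] at hξ ⊢
    have h0 : ⟪W' ξ, W' ξ⟫_ℂ = 0 := by rw [← hG, hξ, inner_zero_left]
    exact inner_self_eq_zero.mp h0
  set K : Submodule ℂ E := LinearMap.range (W : M →ₗ[ℂ] E) with hK
  haveI : FiniteDimensional ℂ K := (W : M →ₗ[ℂ] E).finiteDimensional_range
  -- the lifted map on the range
  let g : K →ₗ[ℂ] E' :=
    ((LinearMap.ker (W : M →ₗ[ℂ] E)).liftQ (W' : M →ₗ[ℂ] E') hker).comp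
      (LinearMap.quotKerEquivRange (W : M →ₗ[ℂ] E)).symm.toLinearMap
  have hg : ∀ (ξ : M) (h : W ξ ∈ K), g ⟨W ξ, h⟩ = W' ξ := by
    intro ξ h
    have h1 : (LinearMap.quotKerEquivRange (W : M →ₗ[ℂ] E))
        (Submodule.Quotient.mk ξ) = ⟨W ξ, h⟩ := by
      apply Subtype.ext
      exact LinearMap.quotKerEquivRange_apply_mk _ ξ
    have h2 := congrArg (LinearMap.quotKerEquivRange (W : M →ₗ[ℂ] E)).symm h1
    rw [LinearEquiv.symm_apply_apply] at h2
    show ((LinearMap.ker (W : M →ₗ[ℂ] E)).liftQ (W' : M →ₗ[ℂ] E') hker)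
        ((LinearMap.quotKerEquivRange (W : M →ₗ[ℂ] E)).symm ⟨W ξ, h⟩) = W' ξ
    rw [← h2, Submodule.liftQ_apply]
    rfl
  -- the connecting operator V
  let V : E →L[ℂ] E' :=
    (LinearMap.toContinuousLinearMap g) ∘L (K.orthogonalProjectionOnto : E →L[ℂ] K)
  have hVW : ∀ ξ : M, V (W ξ) = W' ξ := by
    intro ξ
    have hmem : W ξ ∈ K := LinearMap.mem_range.mpr ⟨ξ, rfl⟩
    have hP : K.orthogonalProjectionOnto (W ξ) = ⟨W ξ, hmem⟩ :=
      Submodule.orthogonalProjectionOnto_mem_subspace_eq_self (⟨W ξ, hmem⟩ : K)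
    show (LinearMap.toContinuousLinearMap g) (K.orthogonalProjectionOnto (W ξ)) = W' ξ
    rw [hP]
    exact hg ξ hmem
  have hVperp : ∀ η ∈ Kᗮ, V η = 0 := by
    intro η hη
    show (LinearMap.toContinuousLinearMap g) (K.orthogonalProjectionOnto η) = 0
    rw [Submodule.orthogonalProjectionOnto_apply_of_mem_orthogonal hη]
    simp
  have hdecomp : ∀ η : E, ∃ ζ : M, ((K.orthogonalProjectionOnto η : K) : E) = W ζ := by
    intro η
    obtain ⟨ζ, hζ⟩ := (K.orthogonalProjectionOnto η).2
    exact ⟨ζ, hζ.symm⟩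
  have hVsplit : ∀ η : E, V η = V ((K.orthogonalProjectionOnto η : K) : E) := by
    intro η
    have h1 : η - ((K.orthogonalProjectionOnto η : K) : E) ∈ Kᗮ :=
      Submodule.sub_starProjection_mem_orthogonal η
    have h2 := hVperp _ h1
    have : V η = V ((K.orthogonalProjectionOnto η : K) : E)
        + V (η - ((K.orthogonalProjectionOnto η : K) : E)) := by
      rw [← map_add]; congr 1; abel
    rw [this, h2, add_zero]
  -- Gram relation for V
  have hVinner : ∀ (η : E) (ξ : M), ⟪V η, W' ξ⟫_ℂ = ⟪η, W ξ⟫_ℂ := by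
    intro η ξ
    obtain ⟨ζ, hζ⟩ := hdecomp η
    have h1 : ⟪η - ((K.orthogonalProjectionOnto η : K) : E), W ξ⟫_ℂ = 0 := by
      have hmem : W ξ ∈ K := LinearMap.mem_range.mpr ⟨ξ, rfl⟩
      exact (Submodule.mem_orthogonal' K _).mp
        (Submodule.sub_starProjection_mem_orthogonal η) _ hmem
    rw [hVsplit η, hζ, hVW, ← hG]
    rw [inner_sub_left, sub_eq_zero] at h1
    rw [← hζ, h1]
  have hVadjW' : ∀ ξ : M, adjoint V (W' ξ) = W ξ := by
    intro ξ
    apply ext_inner_left ℂ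
    intro η
    rw [ContinuousLinearMap.adjoint_inner_right]
    exact hVinner η ξ
  -- intertwining property of V
  have hVint : ∀ (x : G) (η : E), V (ρ x η) = ρ' x (V η) := by
    intro x η
    obtain ⟨ζ, hζ⟩ := hdecomp η
    have hperp : ρ x (η - ((K.orthogonalProjectionOnto η : K) : E)) ∈ Kᗮ := by
      rw [Submodule.mem_orthogonal]
      intro u hu
      obtain ⟨ξ, rfl⟩ := LinearMap.mem_range.mp hu
      have hsub := Submodule.sub_starProjection_mem_orthogonal (K := K) η
      calc ⟪(W : M →ₗ[ℂ] E) ξ, ρ x (η - ((K.orthogonalProjectionOnto η : K) : E))⟫_ℂ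
          = ⟪adjoint (ρ x) (W ξ), η - ((K.orthogonalProjectionOnto η : K) : E)⟫_ℂ := by
            rw [ContinuousLinearMap.adjoint_inner_left]; rfl
        _ = ⟪W (π (star x) ξ), η - ((K.orthogonalProjectionOnto η : K) : E)⟫_ℂ := by
            rw [hρ, ← hWa]
        _ = 0 := by
            refine (Submodule.mem_orthogonal K _).mp hsub _ ?_
            exact LinearMap.mem_range.mpr ⟨π (star x) ξ, rfl⟩
    have hsplit : ρ x η = ρ x ((K.orthogonalProjectionOnto η : K) : E)
        + ρ x (η - ((K.orthogonalProjectionOnto η : K) : E)) := by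
      rw [← map_add]; congr 1; abel
    rw [hsplit, map_add, hVperp _ hperp, add_zero, hζ]
    rw [← hWa x ζ, hVW, hWa' x ζ, ← hVW, ← hζ, ← hVsplit]
  have hVadjint : ∀ (x : G) (η : E'), adjoint V (ρ' x η) = ρ x (adjoint V η) := by
    intro x η
    apply ext_inner_left ℂ
    intro u
    rw [ContinuousLinearMap.adjoint_inner_right]
    calc ⟪V u, ρ' x η⟫_ℂ = ⟪adjoint (ρ' x) (V u), η⟫_ℂ := by
          rw [ContinuousLinearMap.adjoint_inner_left]
      _ = ⟪V (ρ (star x) u), η⟫_ℂ := by rw [hρ', ← hVint]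
      _ = ⟪ρ (star x) u, adjoint V η⟫_ℂ := by
          rw [ContinuousLinearMap.adjoint_inner_right]
      _ = ⟪adjoint (ρ x) u, adjoint V η⟫_ℂ := by rw [hρ]
      _ = ⟪u, ρ x (adjoint V η)⟫_ℂ := by rw [ContinuousLinearMap.adjoint_inner_left]
  refine ⟨V ∘L T ∘L adjoint V, ?_, ?_⟩
  · intro x
    ext η
    have hTx : ∀ v, T (ρ x v) = ρ x (T v) := fun v => by
      have := congrArg (fun f : E →L[ℂ] E => f v) (hT x); simpa using this
    simp only [ContinuousLinearMap.comp_apply]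
    rw [hVadjint, hTx, hVint]
  · ext ξ
    simp only [ContinuousLinearMap.comp_apply]
    rw [hVadjW']
    apply ext_inner_left ℂ
    intro ζ
    rw [ContinuousLinearMap.adjoint_inner_right, ContinuousLinearMap.adjoint_inner_right]
    calc ⟪W' ζ, V (T (W ξ))⟫_ℂ = (starRingEnd ℂ) ⟪V (T (W ξ)), W' ζ⟫_ℂ := by
          rw [inner_conj_symm]
      _ = (starRingEnd ℂ) ⟪T (W ξ), W ζ⟫_ℂ := by rw [hVinner]
      _ = ⟪W ζ, T (W ξ)⟫_ℂ := by rw [inner_conj_symm]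

theorem stmt4
    (Φ : PiMat ιa da →ₗ[ℂ] PiMat ιb db) (hCP : IsCP Φ)
    (hTP : ∀ x : PiMat ιa da, trPi (Φ x) = trPi x)
    (E : Type) [NormedAddCommGroup E] [InnerProductSpace ℂ E] [CompleteSpace E]
    (E' : Type) [NormedAddCommGroup E'] [InnerProductSpace ℂ E'] [CompleteSpace E']
    (ρ : PiMat ιb db →⋆ₐ[ℂ] (E →L[ℂ] E))
    (ρ' : PiMat ιb db →⋆ₐ[ℂ] (E' →L[ℂ] E'))
    (W : EuclideanSpace ℂ ((Σ a, da a) × Σ b, db b × db b) →L[ℂ] E)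
    (W' : EuclideanSpace ℂ ((Σ a, da a) × Σ b, db b × db b) →L[ℂ] E')
    (hW₁ : ∀ (x : PiMat ιb db) ξ,
      W (Matrix.toEuclideanCLM (𝕜 := ℂ) (actOMat (da := da) x) ξ) = ρ x (W ξ))
    (hW₂ : ∀ ξ η, ⟪W ξ, W η⟫_ℂ = ⟪ξ, Matrix.toEuclideanCLM (𝕜 := ℂ) (CMat Φ) η⟫_ℂ)
    (hW'₁ : ∀ (x : PiMat ιb db) ξ,
      W' (Matrix.toEuclideanCLM (𝕜 := ℂ) (actOMat (da := da) x) ξ) = ρ' x (W' ξ))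
    (hW'₂ : ∀ ξ η, ⟪W' ξ, W' η⟫_ℂ = ⟪ξ, Matrix.toEuclideanCLM (𝕜 := ℂ) (CMat Φ) η⟫_ℂ) :
    {S | ∃ T : E →L[ℂ] E, (∀ x : PiMat ιb db, T ∘L ρ x = ρ x ∘L T) ∧
          S = ContinuousLinearMap.adjoint W ∘L T ∘L W}
      = {S | ∃ T' : E' →L[ℂ] E', (∀ x : PiMat ιb db, T' ∘L ρ' x = ρ' x ∘L T') ∧
          S = ContinuousLinearMap.adjoint W' ∘L T' ∘L W'} := by
  have hρS : ∀ x, ContinuousLinearMap.adjoint (ρ x) = ρ (star x) := fun x => by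
    rw [← ContinuousLinearMap.star_eq_adjoint, ← map_star]
  have hρ'S : ∀ x, ContinuousLinearMap.adjoint (ρ' x) = ρ' (star x) := fun x => by
    rw [← ContinuousLinearMap.star_eq_adjoint, ← map_star]
  have hG : ∀ ξ η, ⟪W ξ, W η⟫_ℂ = ⟪W' ξ, W' η⟫_ℂ := fun ξ η => by
    rw [hW₂, hW'₂]
  ext S
  simp only [Set.mem_setOf_eq]
  constructor
  · rintro ⟨T, hT, rfl⟩
    obtain ⟨T', h1, h2⟩ := key (fun x => Matrix.toEuclideanCLM (𝕜 := ℂ) (actOMat (da := da) x))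
      (fun x => ρ x) (fun x => ρ' x) hρS hρ'S W W' hW₁ hW'₁ hG T hT
    exact ⟨T', h1, h2.symm⟩
  · rintro ⟨T', hT', rfl⟩
    obtain ⟨T, h1, h2⟩ := key (fun x => Matrix.toEuclideanCLM (𝕜 := ℂ) (actOMat (da := da) x))
      (fun x => ρ' x) (fun x => ρ x) hρ'S hρS W' W hW'₁ hW₁ (fun ξ η => (hG ξ η).symm) T' hT'
    exact ⟨T, h1, h2.symm⟩

end Stmt4
end

section
/- Let X and Y be finite sets and let Φ : ℓ^∞(X) → ℓ^∞(Y) be the classical channel Φ(e_{xx}) = Σ_{y∈Y} p(y|x) f_{yy}, where p(y|x) ≥ 0 and Σ_y p(y|x) = 1 for each x. Then the quantum confusability multigraph of Φ is S̃_Φ = span{ e_{x₁x₂} ⊗ f_{yy} : x₁, x₂ ∈ X, y ∈ Y, p(y|x₁) p(y|x₂) ≠ 0 } ⊆ B(ℓ²(X)) ⊗ ℓ^∞(Y). -/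
/-!
STATEMENT 8: Let `X` and `Y` be finite sets and `Φ : ℓ^∞(X) → ℓ^∞(Y)` the classical
channel `Φ(e_{xx}) = Σ_y p(y|x) f_{yy}` (`p(y|x) ≥ 0`, `Σ_y p(y|x) = 1`).  Then the
quantum confusability multigraph of `Φ` is
  `S̃_Φ = span{ e_{x₁x₂} ⊗ f_{yy} : p(y|x₁) p(y|x₂) ≠ 0 } ⊆ B(ℓ²(X)) ⊗ ℓ^∞(Y)`.

Encoding: for the commutative output algebra `O = ℓ^∞(Y)` (so `O^op = O`, with
Hilbert–Schmidt space `ℓ²(Y)`), the module `M_Φ = ℓ²(X) ⊗ O^op` has index `X × Y`, the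
right `O^op`-action is by the diagonal matrices `diagY g`, the Choi-type invariant
`C_Φ = Σ_x e_{xx} ⊗ Φ(e_{xx})` is the diagonal matrix with entries `p(y|x)`, and the
confusability multigraph is `W* L(M_Φ) W` for the canonical Stinespring module
`(M_Φ, W = √C_Φ)` (using its independence of the chosen Stinespring module), where
`L(M_Φ)` is the commutant of the `O^op`-action.  The generator `e_{x₁x₂} ⊗ f_{yy}` is
the matrix unit `E_{(x₁,y),(x₂,y)}`.
-/

open scoped ComplexOrder Kronecker Matrix

namespace Stmt8

open scoped Classical

variable {X Y : Type} [Fintype X] [DecidableEq X] [Fintype Y] [DecidableEq Y]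

/-- The right `ℓ^∞(Y)`-action on the module `ℓ²(X) ⊗ ℓ^∞(Y)`. -/
def diagY (g : Y → ℂ) : Matrix (X × Y) (X × Y) ℂ :=
  Matrix.diagonal fun q => g q.2

/-- The Choi-type invariant `C_Φ = Σ_x e_{xx} ⊗ Φ(e_{xx})` as an operator on the
module. -/
noncomputable def CMat (Φ : (X → ℂ) →ₗ[ℂ] (Y → ℂ)) : Matrix (X × Y) (X × Y) ℂ :=
  Matrix.diagonal fun q => Φ (Pi.single q.1 1) q.2

/-- Positive-semidefinite square root (junk value `0` off the PSD cone). -/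
noncomputable def psqrt {n : Type} [Fintype n] [DecidableEq n] (A : Matrix n n ℂ) :
    Matrix n n ℂ :=
  if h : A.PosSemidef then
    h.1.eigenvectorUnitary.1 * Matrix.diagonal ((↑) ∘ (√·) ∘ h.1.eigenvalues) *
      (star h.1.eigenvectorUnitary : Matrix n n ℂ)
  else 0

/-- The quantum confusability multigraph `S̃_Φ = W* L(M_Φ) W` for the canonical
Stinespring module `(M_Φ, √C_Φ)`. -/
noncomputable def multigraph (Φ : (X → ℂ) →ₗ[ℂ] (Y → ℂ)) :
    Set (Matrix (X × Y) (X × Y) ℂ) :=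
  {M | ∃ T, (∀ g : Y → ℂ, T * diagY (X := X) g = diagY (X := X) g * T) ∧
        M = psqrt (CMat Φ) * T * psqrt (CMat Φ)}

/-- The submodule of matrices supported on the confusability pattern. -/
noncomputable def suppMod (p : Y → X → ℝ) : Submodule ℂ (Matrix (X × Y) (X × Y) ℂ) where
  carrier := {M | ∀ q1 q2 : X × Y,
    (q1.2 ≠ q2.2 ∨ p q1.2 q1.1 * p q1.2 q2.1 = 0) → M q1 q2 = 0}
  zero_mem' := fun _ _ _ => rfl
  add_mem' := fun {a b} ha hb q1 q2 h => by
    rw [Matrix.add_apply, ha q1 q2 h, hb q1 q2 h, add_zero]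
  smul_mem' := fun c M hM q1 q2 h => by
    rw [Matrix.smul_apply, hM q1 q2 h, smul_zero]

theorem stmt8 (p : Y → X → ℝ) (hp : ∀ y x, 0 ≤ p y x) (hsum : ∀ x, ∑ y, p y x = 1)
    (Φ : (X → ℂ) →ₗ[ℂ] (Y → ℂ)) (hΦ : ∀ f y, Φ f y = ∑ x, (p y x : ℂ) * f x) :
    multigraph Φ
      = ↑(Submodule.span ℂ
          {M : Matrix (X × Y) (X × Y) ℂ | ∃ x₁ x₂ y, p y x₁ * p y x₂ ≠ 0 ∧
            M = Matrix.single (x₁, y) (x₂, y) (1 : ℂ)}) := by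
  set s : X × Y → ℂ := fun q => ((Real.sqrt (p q.2 q.1) : ℝ) : ℂ) with hs_def
  -- The Choi matrix is the diagonal matrix of the probabilities.
  have hC : CMat Φ = Matrix.diagonal (fun q : X × Y => ((p q.2 q.1 : ℝ) : ℂ)) := by
    unfold CMat
    refine congrArg Matrix.diagonal (funext fun q => ?_)
    rw [hΦ]
    simp [Pi.single_apply, mul_ite]
  -- The square root is the diagonal matrix of the square roots.
  have hCpos : (CMat Φ).PosSemidef := by
    rw [hC]
    exact Matrix.posSemidef_diagonal_iff.mpr fun q => Complex.zero_le_real.mpr (hp _ _)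
  have hDpos : (Matrix.diagonal s).PosSemidef :=
    Matrix.posSemidef_diagonal_iff.mpr fun q => Complex.zero_le_real.mpr (Real.sqrt_nonneg _)
  have hW : psqrt (CMat Φ) = Matrix.diagonal s := by
    have hsq : (Matrix.diagonal s) ^ 2 = CMat Φ := by
      rw [hC, pow_two, Matrix.diagonal_mul_diagonal]
      refine congrArg Matrix.diagonal (funext fun q => ?_)
      show ((Real.sqrt (p q.2 q.1) : ℝ) : ℂ) * ((Real.sqrt (p q.2 q.1) : ℝ) : ℂ) = _
      rw [← Complex.ofReal_mul, Real.mul_self_sqrt (hp _ _)]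
    rw [psqrt, dif_pos hCpos]
    have e : hCpos.1.eigenvectorUnitary.1 * Matrix.diagonal ((↑) ∘ (√·) ∘ hCpos.1.eigenvalues) *
        (star hCpos.1.eigenvectorUnitary : Matrix (X × Y) (X × Y) ℂ) = cfc Real.sqrt (CMat Φ) := by
      rw [hCpos.1.cfc_eq, Matrix.IsHermitian.cfc, Unitary.conjStarAlgAut_apply]; rfl
    have hDsa : IsSelfAdjoint (Matrix.diagonal s) := hDpos.1
    have hspec : ∀ x ∈ spectrum ℝ (Matrix.diagonal s), 0 ≤ x := by
      intro x hx
      rw [hDpos.1.spectrum_real_eq_range_eigenvalues] at hx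
      obtain ⟨i, rfl⟩ := hx
      exact hDpos.eigenvalues_nonneg i
    rw [e, ← hsq, ← cfc_comp_pow (f := Real.sqrt) (n := 2) (ha := hDsa)
      (hf := Real.continuous_sqrt.continuousOn)]
    rw [cfc_congr (g := id) (fun x hx => by
      simp only [Function.comp_apply, id]; exact Real.sqrt_sq (hspec x hx))]
    exact cfc_id ℝ _ hDsa
  have hentry : ∀ (T : Matrix (X × Y) (X × Y) ℂ) (q1 q2 : X × Y),
      (Matrix.diagonal s * T * Matrix.diagonal s) q1 q2 = s q1 * T q1 q2 * s q2 := by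
    intro T q1 q2
    rw [Matrix.mul_diagonal, Matrix.diagonal_mul]
  have hs0 : ∀ q : X × Y, p q.2 q.1 = 0 → s q = 0 := by
    intro q h
    simp [hs_def, h]
  have hs0' : ∀ q : X × Y, s q = 0 → p q.2 q.1 = 0 := by
    intro q h
    have h2 : ((Real.sqrt (p q.2 q.1) : ℝ) : ℂ) = 0 := h
    exact (Real.sqrt_eq_zero (hp _ _)).mp (by exact_mod_cast h2)
  ext M
  simp only [multigraph, Set.mem_setOf_eq, SetLike.mem_coe]
  constructor
  · rintro ⟨T, hTc, rfl⟩
    -- first: membership in the support submodule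
    have hMsupp : ∀ q1 q2 : X × Y,
        (q1.2 ≠ q2.2 ∨ p q1.2 q1.1 * p q1.2 q2.1 = 0) →
        (psqrt (CMat Φ) * T * psqrt (CMat Φ)) q1 q2 = 0 := by
      intro q1 q2 hcond
      rw [hW, hentry]
      by_cases hy : q1.2 = q2.2
      · have hz : p q1.2 q1.1 * p q1.2 q2.1 = 0 := by tauto
        rcases mul_eq_zero.mp hz with h | h
        · rw [hs0 q1 h]; ring
        · rw [hy] at h
          rw [hs0 q2 h]; ring
      · have hT0 : T q1 q2 = 0 := by
          have h1 : (T * diagY (X := X) (Pi.single q2.2 1)) q1 q2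
              = (diagY (X := X) (Pi.single q2.2 1) * T) q1 q2 := by
            rw [hTc]
          rw [diagY, Matrix.mul_diagonal, Matrix.diagonal_mul] at h1
          rw [Pi.single_eq_same, Pi.single_eq_of_ne hy, mul_one, zero_mul] at h1
          exact h1
        rw [hT0]; ring
    -- now: support submodule is inside the span
    rw [Matrix.matrix_eq_sum_single (psqrt (CMat Φ) * T * psqrt (CMat Φ))]
    apply Submodule.sum_mem
    intro q1 _
    apply Submodule.sum_mem
    intro q2 _
    by_cases hy : q1.2 = q2.2
    · by_cases hz : p q1.2 q1.1 * p q1.2 q2.1 = 0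
      · rw [hMsupp q1 q2 (Or.inr hz)]
        simp
      · have : Matrix.single q1 q2 ((psqrt (CMat Φ) * T * psqrt (CMat Φ)) q1 q2)
            = (psqrt (CMat Φ) * T * psqrt (CMat Φ)) q1 q2
              • Matrix.single q1 q2 (1 : ℂ) := by
          rw [Matrix.smul_single, smul_eq_mul, mul_one]
        rw [this]
        refine Submodule.smul_mem _ _ (Submodule.subset_span ?_)
        have hq2 : ((q2.1 : X), q1.2) = q2 := by rw [hy]
        exact ⟨q1.1, q2.1, q1.2, hz, by rw [hq2]⟩
    · rw [hMsupp q1 q2 (Or.inl hy)]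
      simp
  · intro hMem
    have hMsupp : M ∈ suppMod p := by
      refine Submodule.span_le.mpr ?_ hMem
      rintro N ⟨x1, x2, y, hpne, rfl⟩
      intro q1 q2 hcond
      show (if (x1, y) = q1 ∧ (x2, y) = q2 then (1 : ℂ) else 0) = 0
      rw [if_neg]
      rintro ⟨rfl, rfl⟩
      rcases hcond with h | h
      · exact h rfl
      · exact hpne h
    refine ⟨Matrix.of fun q1 q2 => (s q1 * s q2)⁻¹ * M q1 q2, ?_, ?_⟩
    · intro g
      ext q1 q2
      rw [diagY, Matrix.mul_diagonal, Matrix.diagonal_mul, Matrix.of_apply]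
      by_cases hy : q1.2 = q2.2
      · rw [hy]; ring
      · rw [hMsupp q1 q2 (Or.inl hy)]; ring
    · ext q1 q2
      rw [hW, hentry, Matrix.of_apply]
      by_cases hz : s q1 * s q2 = 0
      · have hM0 : M q1 q2 = 0 := by
          by_cases hy : q1.2 = q2.2
          · refine hMsupp q1 q2 (Or.inr ?_)
            rcases mul_eq_zero.mp hz with h | h
            · exact mul_eq_zero.mpr (Or.inl (hs0' q1 h))
            · refine mul_eq_zero.mpr (Or.inr ?_)
              have := hs0' q2 h
              rw [hy]
              exact this
          · exact hMsupp q1 q2 (Or.inl hy)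
        rw [hM0]; ring
      · have : s q1 * ((s q1 * s q2)⁻¹ * M q1 q2) * s q2
            = (s q1 * s q2) * (s q1 * s q2)⁻¹ * M q1 q2 := by ring
        rw [this, mul_inv_cancel₀ hz, one_mul]


end Stmt8
end

section
/- Let X and Y be finite sets. For a multi-relation R ⊆ X × X × Y define V_R = span{ e_{x₁x₂} ⊗ e_{yy} : (x₁, x₂, y) ∈ R } ⊆ B(ℓ²(X)) ⊗ ℓ^∞(Y). Conversely, for a quantum multi-relation V ⊆ B(ℓ²(X)) ⊗ ℓ^∞(Y) on (ℓ^∞(X), ℓ^∞(Y)) define R_V = { (x₁, x₂, y) : there exists T ∈ V with ⟨e_{x₁} ⊗ e_y, T (e_{x₂} ⊗ e_y)⟩ ≠ 0 }. Then these assignments are mutually inverse (V_{R_V} = V and R_{V_R} = R) and establish a bijection between multi-relations on (X, Y) and quantum multi-relations on (ℓ^∞(X), ℓ^∞(Y)). -/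
/-!
STATEMENT 11: Let `X, Y` be finite sets.  For a multi-relation `R ⊆ X × X × Y` define
`V_R = span{ e_{x₁x₂} ⊗ e_{yy} : (x₁,x₂,y) ∈ R } ⊆ B(ℓ²(X)) ⊗ ℓ^∞(Y)`; conversely, for
a quantum multi-relation `V` on `(ℓ^∞(X), ℓ^∞(Y))` define
`R_V = { (x₁,x₂,y) : ∃ T ∈ V, ⟨e_{x₁} ⊗ e_y, T(e_{x₂} ⊗ e_y)⟩ ≠ 0 }`.
These assignments are mutually inverse (`V_{R_V} = V`, `R_{V_R} = R`) and establish a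
bijection between multi-relations on `(X,Y)` and quantum multi-relations on
`(ℓ^∞(X), ℓ^∞(Y))`.

Encoding: `B(ℓ²(X)) ⊗ ℓ^∞(Y) ⊆ B(ℓ²(X) ⊗ ℓ²(Y))` consists of the matrices on `X × Y`
that vanish off the diagonal in the `Y`-component; `e_{x₁x₂} ⊗ e_{yy}` is the matrix
unit at `((x₁,y),(x₂,y))`; the matrix coefficient `⟨e_{x₁} ⊗ e_y, T(e_{x₂} ⊗ e_y)⟩` is
the entry `T (x₁,y) (x₂,y)`; `M' = ℓ^∞(X)` and `Z(ℓ^∞(Y)) = ℓ^∞(Y)` act by diagonal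
matrices.
-/

open scoped Kronecker Matrix

namespace Stmt11

variable {X Y : Type} [Fintype X] [DecidableEq X] [Fintype Y] [DecidableEq Y]

/-- A quantum multi-relation on `(ℓ^∞(X), ℓ^∞(Y))`: a subspace of
`B(ℓ²X) ⊗ ℓ^∞(Y) ⊆ B(ℓ²X ⊗ ℓ²Y)` which is an `(M'⊗1)`-bimodule and invariant under
`1 ⊗ Z(N)`. -/
def IsQMR (V : Submodule ℂ (Matrix (X × Y) (X × Y) ℂ)) : Prop :=
  (∀ T ∈ V, ∀ (x₁ x₂ : X) (y y' : Y), y ≠ y' → T (x₁, y) (x₂, y') = 0) ∧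
  (∀ f : X → ℂ, ∀ T ∈ V,
    (Matrix.diagonal f ⊗ₖ (1 : Matrix Y Y ℂ)) * T ∈ V ∧
    T * (Matrix.diagonal f ⊗ₖ (1 : Matrix Y Y ℂ)) ∈ V) ∧
  (∀ g : Y → ℂ, ∀ T ∈ V, ((1 : Matrix X X ℂ) ⊗ₖ Matrix.diagonal g) * T ∈ V)

/-- The quantum multi-relation associated with a classical multi-relation. -/
noncomputable def VR (R : Set (X × X × Y)) : Submodule ℂ (Matrix (X × Y) (X × Y) ℂ) :=
  Submodule.span ℂ
    {T | ∃ x₁ x₂ y, (x₁, x₂, y) ∈ R ∧ T = Matrix.single (x₁, y) (x₂, y) (1 : ℂ)}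

/-- The classical multi-relation associated with a quantum multi-relation. -/
def RV (V : Submodule ℂ (Matrix (X × Y) (X × Y) ℂ)) : Set (X × X × Y) :=
  {q | ∃ T ∈ V, T (q.1, q.2.2) (q.2.1, q.2.2) ≠ 0}

set_option linter.unusedSectionVars false

lemma std_apply (p q i j : X × Y) (v : ℂ) :
    Matrix.single p q v i j = if p = i ∧ q = j then v else 0 := rfl

lemma kron_left (f : X → ℂ) :
    (Matrix.diagonal f ⊗ₖ (1 : Matrix Y Y ℂ)) =
      Matrix.diagonal (fun p : X × Y => f p.1) := by
  rw [← Matrix.diagonal_one, Matrix.diagonal_kronecker_diagonal]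
  simp

lemma kron_right (g : Y → ℂ) :
    ((1 : Matrix X X ℂ) ⊗ₖ Matrix.diagonal g) =
      Matrix.diagonal (fun p : X × Y => g p.2) := by
  rw [← Matrix.diagonal_one, Matrix.diagonal_kronecker_diagonal]
  simp

lemma diag_mul_std (d : X × Y → ℂ) (p q : X × Y) (c : ℂ) :
    Matrix.diagonal d * Matrix.single p q c =
      d p • Matrix.single p q c := by
  ext i j
  rw [Matrix.diagonal_mul, Matrix.smul_apply, std_apply]
  split_ifs with h
  · obtain ⟨rfl, rfl⟩ := h; simp [mul_comm]
  · simp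

lemma std_mul_diag (d : X × Y → ℂ) (p q : X × Y) (c : ℂ) :
    Matrix.single p q c * Matrix.diagonal d =
      d q • Matrix.single p q c := by
  ext i j
  rw [Matrix.mul_diagonal, Matrix.smul_apply, std_apply]
  split_ifs with h
  · obtain ⟨rfl, rfl⟩ := h; simp [mul_comm]
  · simp

lemma VR_entry_zero {R : Set (X × X × Y)} {T : Matrix (X × Y) (X × Y) ℂ}
    (hT : T ∈ VR R) (p q : X × Y)
    (h : ¬ (p.2 = q.2 ∧ (p.1, q.1, p.2) ∈ R)) : T p q = 0 := by
  have : VR R ≤ LinearMap.ker (Matrix.entryLinearMap ℂ ℂ p q) := by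
    apply Submodule.span_le.2
    rintro _ ⟨x₁, x₂, y, hR, rfl⟩
    simp only [SetLike.mem_coe, LinearMap.mem_ker, Matrix.entryLinearMap_apply]
    rw [std_apply, if_neg]
    rintro ⟨rfl, rfl⟩
    exact h ⟨rfl, hR⟩
  simpa using this hT

theorem stmt11 :
    (∀ R : Set (X × X × Y), IsQMR (VR R)) ∧
    (∀ R : Set (X × X × Y), RV (VR R) = R) ∧
    (∀ V : Submodule ℂ (Matrix (X × Y) (X × Y) ℂ), IsQMR V → VR (RV V) = V) := by
  refine ⟨fun R => ⟨?_, ?_, ?_⟩, fun R => ?_, fun V hV => ?_⟩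
  · intro T hT x₁ x₂ y y' hyy'
    exact VR_entry_zero hT (x₁, y) (x₂, y') (by simp [hyy'])
  · intro f T hT
    constructor
    · rw [kron_left]
      refine Submodule.span_induction
        (p := fun T _ => Matrix.diagonal (fun p : X × Y => f p.1) * T ∈ VR R)
        ?_ ?_ ?_ ?_ hT
      · rintro _ ⟨x₁, x₂, y, hR, rfl⟩
        rw [diag_mul_std]
        exact Submodule.smul_mem _ _ (Submodule.subset_span ⟨x₁, x₂, y, hR, rfl⟩)
      · simp
      · intro a b _ _ ha hb
        rw [mul_add]; exact Submodule.add_mem _ ha hb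
      · intro c a _ ha
        rw [Matrix.mul_smul]; exact Submodule.smul_mem _ _ ha
    · rw [kron_left]
      refine Submodule.span_induction
        (p := fun T _ => T * Matrix.diagonal (fun p : X × Y => f p.1) ∈ VR R)
        ?_ ?_ ?_ ?_ hT
      · rintro _ ⟨x₁, x₂, y, hR, rfl⟩
        rw [std_mul_diag]
        exact Submodule.smul_mem _ _ (Submodule.subset_span ⟨x₁, x₂, y, hR, rfl⟩)
      · simp
      · intro a b _ _ ha hb
        rw [add_mul]; exact Submodule.add_mem _ ha hb
      · intro c a _ ha
        rw [Matrix.smul_mul]; exact Submodule.smul_mem _ _ ha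
  · intro g T hT
    rw [kron_right]
    refine Submodule.span_induction
      (p := fun T _ => Matrix.diagonal (fun p : X × Y => g p.2) * T ∈ VR R)
      ?_ ?_ ?_ ?_ hT
    · rintro _ ⟨x₁, x₂, y, hR, rfl⟩
      rw [diag_mul_std]
      exact Submodule.smul_mem _ _ (Submodule.subset_span ⟨x₁, x₂, y, hR, rfl⟩)
    · simp
    · intro a b _ _ ha hb
      rw [mul_add]; exact Submodule.add_mem _ ha hb
    · intro c a _ ha
      rw [Matrix.mul_smul]; exact Submodule.smul_mem _ _ ha
  · ext ⟨x₁, x₂, y⟩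
    constructor
    · rintro ⟨T, hT, hne⟩
      by_contra hR
      exact hne (VR_entry_zero hT (x₁, y) (x₂, y) (by simp [hR]))
    · intro hR
      exact ⟨Matrix.single (x₁, y) (x₂, y) 1,
        Submodule.subset_span ⟨x₁, x₂, y, hR, rfl⟩, by simp⟩
  · obtain ⟨h1, h2, h3⟩ := hV
    apply le_antisymm
    · apply Submodule.span_le.2
      rintro _ ⟨x₁, x₂, y, ⟨T, hT, hne⟩, rfl⟩
      set c : ℂ := T (x₁, y) (x₂, y) with hc
      have m1 : (Matrix.diagonal (fun a : X => if a = x₁ then (1:ℂ) else 0) ⊗ₖ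
          (1 : Matrix Y Y ℂ)) * T ∈ V := (h2 _ T hT).1
      have m2 : ((Matrix.diagonal (fun a : X => if a = x₁ then (1:ℂ) else 0) ⊗ₖ
          (1 : Matrix Y Y ℂ)) * T) *
          (Matrix.diagonal (fun a : X => if a = x₂ then (1:ℂ) else 0) ⊗ₖ
          (1 : Matrix Y Y ℂ)) ∈ V := (h2 _ _ m1).2
      have m3 : ((1 : Matrix X X ℂ) ⊗ₖ
          Matrix.diagonal (fun b : Y => if b = y then (1:ℂ) else 0)) *
          (((Matrix.diagonal (fun a : X => if a = x₁ then (1:ℂ) else 0) ⊗ₖ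
          (1 : Matrix Y Y ℂ)) * T) *
          (Matrix.diagonal (fun a : X => if a = x₂ then (1:ℂ) else 0) ⊗ₖ
          (1 : Matrix Y Y ℂ))) ∈ V := h3 _ _ m2
      have key : ((1 : Matrix X X ℂ) ⊗ₖ
          Matrix.diagonal (fun b : Y => if b = y then (1:ℂ) else 0)) *
          (((Matrix.diagonal (fun a : X => if a = x₁ then (1:ℂ) else 0) ⊗ₖ
          (1 : Matrix Y Y ℂ)) * T) *
          (Matrix.diagonal (fun a : X => if a = x₂ then (1:ℂ) else 0) ⊗ₖ
          (1 : Matrix Y Y ℂ))) =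
          c • Matrix.single (x₁, y) (x₂, y) (1 : ℂ) := by
        rw [kron_left, kron_left, kron_right]
        ext pq pq'
        obtain ⟨a, b⟩ := pq
        obtain ⟨a', b'⟩ := pq'
        rw [Matrix.smul_apply, Matrix.diagonal_mul, Matrix.mul_diagonal,
          Matrix.diagonal_mul, std_apply]
        by_cases hb : b = y
        · by_cases hb' : b' = y
          · by_cases ha : a = x₁
            · by_cases ha' : a' = x₂
              · rw [ha, hb, ha', hb', hc]
                simp
              · have : ¬((x₁, y) = (a, b) ∧ (x₂, y) = (a', b')) := by
                  rintro ⟨-, h⟩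
                  exact ha' (congrArg Prod.fst h).symm
                rw [if_neg this, if_neg (fun h => ha' h)]
                simp
            · have : ¬((x₁, y) = (a, b) ∧ (x₂, y) = (a', b')) := by
                rintro ⟨h, -⟩
                exact ha (congrArg Prod.fst h).symm
              rw [if_neg this, if_neg (fun h => ha h)]
              simp
          · have hT0 : T (a, b) (a', b') = 0 :=
              h1 T hT a a' b b' (by rw [hb]; exact fun h => hb' h.symm)
            have : ¬((x₁, y) = (a, b) ∧ (x₂, y) = (a', b')) := by
              rintro ⟨-, h⟩
              exact hb' (congrArg Prod.snd h).symm
            rw [if_neg this, hT0]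
            simp
        · have : ¬((x₁, y) = (a, b) ∧ (x₂, y) = (a', b')) := by
            rintro ⟨h, -⟩
            exact hb (congrArg Prod.snd h).symm
          rw [if_neg this, if_neg (fun h => hb h)]
          simp
      rw [key] at m3
      have heq : Matrix.single (x₁, y) (x₂, y) (1 : ℂ) =
          c⁻¹ • (c • Matrix.single (x₁, y) (x₂, y) (1 : ℂ)) := by
        rw [smul_smul, inv_mul_cancel₀ hne, one_smul]
      rw [heq]
      exact Submodule.smul_mem _ _ m3
    · intro T hT
      rw [Matrix.matrix_eq_sum_single T]
      apply Submodule.sum_mem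
      rintro ⟨x₁, b⟩ -
      apply Submodule.sum_mem
      rintro ⟨x₂, b'⟩ -
      by_cases hz : T (x₁, b) (x₂, b') = 0
      · rw [hz, Matrix.single_zero]; exact Submodule.zero_mem _
      · have hbb' : b = b' := by
          by_contra hne
          exact hz (h1 T hT x₁ x₂ b b' hne)
        subst hbb'
        have : Matrix.single (x₁, b) (x₂, b) (T (x₁, b) (x₂, b)) =
            T (x₁, b) (x₂, b) • Matrix.single (x₁, b) (x₂, b) (1 : ℂ) := by
          rw [Matrix.smul_single, smul_eq_mul, mul_one]
        rw [this]
        exact Submodule.smul_mem _ _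
          (Submodule.subset_span ⟨x₁, x₂, b, ⟨T, hT, hz⟩, rfl⟩)

end Stmt11
end

section
/- Let V ⊆ B(H) ⊗ N be a quantum multigraph on a pair of finite-dimensional algebras (M, N), with N minimally represented on K, let P_V ∈ M ⊗ M^op ⊗ N ⊗ N^op be its quantum multi-edge indicator, and let Ṽ = (id ⊗ tr_K)(V) be the underlying quantum single-edged graph. Define S_V = (id ⊗ id ⊗ tr_K)((id ⊗ id ⊗ m)(P_V)) ∈ M ⊗ M^op, where m : N ⊗ N^op → N is the multiplication map. Then S_V is a positive element of M ⊗ M^op, and the range of the Weaver action of S_V on B(H) equals Ṽ. -/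
/-!
STATEMENT 14: Let `V ⊆ B(H) ⊗ N` be a quantum multigraph on a pair of
finite-dimensional algebras `(M, N)`, with `N` minimally represented on `K`
(`Z(N) = N'`), let `P_V ∈ M ⊗ M^op ⊗ N ⊗ N^op` be its quantum multi-edge indicator
(the element whose Weaver action is the orthogonal projection of `B(H ⊗ K)` onto `V`
for the Hilbert–Schmidt inner product), and let `Ṽ = (id ⊗ tr_K)(V)` be the underlying
quantum single-edged graph.  Define
`S_V = (id ⊗ id ⊗ tr_K)((id ⊗ id ⊗ m)(P_V)) ∈ M ⊗ M^op`.
Then `S_V` is a positive element of `M ⊗ M^op`, and the range of the Weaver action of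
`S_V` on `B(H)` equals `Ṽ`.

Encoding: `M ⊗ M^op ⊗ N ⊗ N^op` is represented faithfully on `(H ⊗ conj H) ⊗ (K ⊗ conj K)`
by `m₁⊗m₂⊗n₁⊗n₂ ↦ (m₁ ⊗ₖ m₂ᵀ) ⊗ₖ (n₁ ⊗ₖ n₂ᵀ)` (so positivity is positive
semidefiniteness there); the Weaver action and the slice `S_V` of the 4-leg tensor
`P_V` are given by the explicit entry formulas `weaver` and `sVmat`; `id ⊗ tr_K` is the
partial trace `ptrK`.
-/

open scoped Kronecker Matrix ComplexOrder

namespace Stmt14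

variable {h k : Type} [Fintype h] [DecidableEq h] [Fintype k] [DecidableEq k]

def commutantS (M : StarSubalgebra ℂ (Matrix h h ℂ)) : Set (Matrix h h ℂ) :=
  {A | ∀ m ∈ M, A * m = m * A}

def centerS (N : StarSubalgebra ℂ (Matrix k k ℂ)) : Set (Matrix k k ℂ) :=
  {z | z ∈ N ∧ ∀ n ∈ N, z * n = n * z}

/-- `B(H) ⊗ N ⊆ B(H ⊗ K)`. -/
def BHN (N : StarSubalgebra ℂ (Matrix k k ℂ)) : Set (Matrix (h × k) (h × k) ℂ) :=
  ↑(Submodule.span ℂ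
      {T : Matrix (h × k) (h × k) ℂ | ∃ A : Matrix h h ℂ, ∃ n ∈ N, T = A ⊗ₖ n})

/-- Quantum multi-relation (= multigraph) on `(M, N)`. -/
def IsQMR (M : StarSubalgebra ℂ (Matrix h h ℂ)) (N : StarSubalgebra ℂ (Matrix k k ℂ))
    (V : Submodule ℂ (Matrix (h × k) (h × k) ℂ)) : Prop :=
  (∀ T ∈ V, T ∈ BHN (h := h) N) ∧
  (∀ A ∈ commutantS M, ∀ T ∈ V,
    (A ⊗ₖ (1 : Matrix k k ℂ)) * T ∈ V ∧ T * (A ⊗ₖ (1 : Matrix k k ℂ)) ∈ V) ∧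
  (∀ z ∈ centerS N, ∀ T ∈ V, ((1 : Matrix h h ℂ) ⊗ₖ z) * T ∈ V)

/-- The faithful representation of `M ⊗ M^op ⊗ N ⊗ N^op`:
span of `(m₁ ⊗ₖ m₂ᵀ) ⊗ₖ (n₁ ⊗ₖ n₂ᵀ)`. -/
def MMNN (M : StarSubalgebra ℂ (Matrix h h ℂ)) (N : StarSubalgebra ℂ (Matrix k k ℂ)) :
    Set (Matrix ((h × h) × k × k) ((h × h) × k × k) ℂ) :=
  ↑(Submodule.span ℂ
      {X | ∃ m₁ ∈ M, ∃ m₂ ∈ M, ∃ n₁ ∈ N, ∃ n₂ ∈ N,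
        X = (m₁ ⊗ₖ m₂ᵀ) ⊗ₖ (n₁ ⊗ₖ (n₂ : Matrix k k ℂ)ᵀ)})

/-- The faithful representation of `M ⊗ M^op`: span of `m₁ ⊗ₖ m₂ᵀ`. -/
def MM (M : StarSubalgebra ℂ (Matrix h h ℂ)) : Set (Matrix (h × h) (h × h) ℂ) :=
  ↑(Submodule.span ℂ {X | ∃ m₁ ∈ M, ∃ m₂ ∈ M, X = m₁ ⊗ₖ (m₂ : Matrix h h ℂ)ᵀ})

/-- The Weaver action of (the 4-leg representation of) `M ⊗ M^op ⊗ N ⊗ N^op` on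
`B(H ⊗ K)`: on `m₁⊗m₂⊗n₁⊗n₂` and `S` it is `(m₁ ⊗ n₁) S (m₂ ⊗ n₂)`. -/
noncomputable def weaver (P : Matrix ((h × h) × k × k) ((h × h) × k × k) ℂ)
    (S : Matrix (h × k) (h × k) ℂ) : Matrix (h × k) (h × k) ℂ :=
  Matrix.of fun r c =>
    ∑ a : h, ∑ b : h, ∑ u : k, ∑ v : k,
      P ((r.1, c.1), (r.2, c.2)) ((a, b), (u, v)) * S (a, u) (b, v)

/-- The Weaver action of (the 2-leg representation of) `M ⊗ M^op` on `B(H)`: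
on `m₁ ⊗ m₂` and `S` it is `m₁ S m₂`. -/
noncomputable def weaver2 (Q : Matrix (h × h) (h × h) ℂ) (S : Matrix h h ℂ) :
    Matrix h h ℂ :=
  Matrix.of fun r c => ∑ a : h, ∑ b : h, Q (r, c) (a, b) * S a b

/-- The Hilbert–Schmidt inner product of matrices. -/
noncomputable def hsInner {d : Type} [Fintype d] (A B : Matrix d d ℂ) : ℂ :=
  (Aᴴ * B).trace

/-- `S_V = (id ⊗ id ⊗ tr_K)((id ⊗ id ⊗ mult)(P_V))`, extracted from the 4-leg
representation (on `(m₁⊗ₖm₂ᵀ)⊗ₖ(n₁⊗ₖn₂ᵀ)` it gives `tr(n₁n₂)·(m₁⊗ₖm₂ᵀ)`). -/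
noncomputable def sVmat (P : Matrix ((h × h) × k × k) ((h × h) × k × k) ℂ) :
    Matrix (h × h) (h × h) ℂ :=
  Matrix.of fun r c => ∑ u : k, ∑ v : k, P (r, (u, u)) (c, (v, v))

/-- The partial trace `id ⊗ tr_K : B(H) ⊗ N → B(H)` (on `A ⊗ₖ n` it gives `tr(n)·A`). -/
noncomputable def ptrK (T : Matrix (h × k) (h × k) ℂ) : Matrix h h ℂ :=
  Matrix.of fun x x' => ∑ u : k, T (x, u) (x', u)

set_option linter.unusedSectionVars false

lemma hsInner_eq {d : Type} [Fintype d] (A B : Matrix d d ℂ) :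
    hsInner A B = ∑ p : d, ∑ q : d, (starRingEnd ℂ) (A q p) * B q p := by
  simp [hsInner, Matrix.trace, Matrix.mul_apply, Matrix.conjTranspose_apply, Matrix.diag]

lemma hsInner_conj {d : Type} [Fintype d] (A B : Matrix d d ℂ) :
    hsInner A B = (starRingEnd ℂ) (hsInner B A) := by
  simp only [hsInner_eq, map_sum, map_mul, Complex.conj_conj]
  refine Finset.sum_congr rfl fun p _ => Finset.sum_congr rfl fun q _ => ?_
  ring

lemma hsInner_add_left {d : Type} [Fintype d] (A B C : Matrix d d ℂ) :
    hsInner (A + B) C = hsInner A C + hsInner B C := by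
  simp [hsInner_eq, add_mul, Finset.sum_add_distrib]

lemma hsInner_self_real {d : Type} [Fintype d] (A : Matrix d d ℂ) :
    hsInner A A = ((∑ p : d, ∑ q : d, Complex.normSq (A q p) : ℝ) : ℂ) := by
  rw [hsInner_eq]
  push_cast
  refine Finset.sum_congr rfl fun p _ => Finset.sum_congr rfl fun q _ => ?_
  rw [← Complex.normSq_eq_conj_mul_self]

lemma hsInner_self_nonneg {d : Type} [Fintype d] (A : Matrix d d ℂ) :
    0 ≤ hsInner A A := by
  rw [hsInner_self_real, Complex.zero_le_real]
  exact Finset.sum_nonneg fun p _ => Finset.sum_nonneg fun q _ => Complex.normSq_nonneg _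

lemma hsInner_self_eq_zero {d : Type} [Fintype d] {A : Matrix d d ℂ}
    (hA : hsInner A A = 0) : A = 0 := by
  rw [hsInner_self_real] at hA
  norm_cast at hA
  have h0 : ∀ p ∈ (Finset.univ : Finset d), ∑ q : d, Complex.normSq (A q p) = 0 := by
    rw [← Finset.sum_eq_zero_iff_of_nonneg]
    · exact hA
    · exact fun p _ => Finset.sum_nonneg fun q _ => Complex.normSq_nonneg _
  ext q p
  have := (Finset.sum_eq_zero_iff_of_nonneg (fun q _ => Complex.normSq_nonneg (A q p))).1
    (h0 p (Finset.mem_univ p)) q (Finset.mem_univ q)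
  simpa [Complex.normSq_eq_zero] using this

lemma hsInner_kron_one (X : Matrix h h ℂ) (T : Matrix (h × k) (h × k) ℂ) :
    hsInner (X ⊗ₖ (1 : Matrix k k ℂ)) T = hsInner X (ptrK T) := by
  rw [hsInner_eq, hsInner_eq]
  simp only [ptrK, Matrix.of_apply, Fintype.sum_prod_type, Matrix.kroneckerMap_apply,
    Matrix.one_apply, mul_ite, mul_one, mul_zero, apply_ite (starRingEnd ℂ), map_zero,
    map_one, ite_mul, zero_mul, one_mul, Finset.sum_ite_eq, Finset.sum_ite_eq',
    Finset.mem_univ, if_true, Finset.mul_sum]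
  refine Finset.sum_congr rfl fun p1 _ => ?_
  exact Finset.sum_comm

lemma ptrK_weaver (P : Matrix ((h × h) × k × k) ((h × h) × k × k) ℂ) (X : Matrix h h ℂ) :
    ptrK (weaver P (X ⊗ₖ (1 : Matrix k k ℂ))) = weaver2 (sVmat P) X := by
  ext p q
  simp only [ptrK, weaver, weaver2, sVmat, Matrix.of_apply, Matrix.kroneckerMap_apply,
    Matrix.one_apply, mul_ite, mul_one, mul_zero, Finset.sum_ite_eq, Finset.sum_ite_eq',
    Finset.mem_univ, if_true, Finset.sum_mul, Finset.mul_sum]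
  rw [Finset.sum_comm]
  exact Finset.sum_congr rfl fun a _ => Finset.sum_comm

lemma hsInner_vec (y : (h × h) → ℂ) (B : Matrix h h ℂ) :
    hsInner (Matrix.of fun a b => y (a, b)) B
      = ∑ p : h × h, (starRingEnd ℂ) (y p) * B p.1 p.2 := by
  rw [hsInner_eq]
  simp only [Matrix.of_apply, Fintype.sum_prod_type]
  exact Finset.sum_comm

lemma hsInner_weaver2 (A : Matrix (h × h) (h × h) ℂ) (y : (h × h) → ℂ) :
    hsInner (Matrix.of fun a b => y (a, b)) (weaver2 A (Matrix.of fun a b => y (a, b)))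
      = ∑ p : h × h, (starRingEnd ℂ) (y p) * (A *ᵥ y) p := by
  rw [hsInner_vec]
  refine Finset.sum_congr rfl fun p _ => ?_
  simp [weaver2, Matrix.mulVec, dotProduct, Fintype.sum_prod_type]

lemma hsInner_stdB (i j : h) (Y : Matrix h h ℂ) :
    hsInner (Matrix.single i j (1 : ℂ)) Y = Y i j := by
  rw [hsInner_eq]
  simp [Matrix.single, ite_and, apply_ite]

lemma weaver2_stdB (A : Matrix (h × h) (h × h) ℂ) (i j p q : h) :
    weaver2 A (Matrix.single i j (1 : ℂ)) p q = A (p, q) (i, j) := by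
  simp [weaver2, Matrix.single, ite_and, mul_ite]

lemma sVmat_entry (P : Matrix ((h × h) × k × k) ((h × h) × k × k) ℂ) (r c : h × h) :
    sVmat P r c
      = hsInner (Matrix.single r.1 r.2 (1 : ℂ) ⊗ₖ (1 : Matrix k k ℂ))
          (weaver P (Matrix.single c.1 c.2 (1 : ℂ) ⊗ₖ (1 : Matrix k k ℂ))) := by
  rw [hsInner_kron_one, ptrK_weaver, hsInner_stdB, weaver2_stdB]

noncomputable def Lmap (A : Matrix (h × h) (h × h) ℂ) :
    EuclideanSpace ℂ (h × h) →ₗ[ℂ] EuclideanSpace ℂ (h × h) :=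
  (WithLp.linearEquiv 2 ℂ ((h × h) → ℂ)).symm.toLinearMap ∘ₗ A.mulVecLin ∘ₗ
    (WithLp.linearEquiv 2 ℂ ((h × h) → ℂ)).toLinearMap

lemma Lmap_apply (A : Matrix (h × h) (h × h) ℂ) (y : EuclideanSpace ℂ (h × h)) :
    Lmap A y = fun p => (A *ᵥ (fun r => y r)) p := by
  ext p
  rfl

lemma euclid_inner (x y : EuclideanSpace ℂ (h × h)) :
    (inner ℂ x y : ℂ) = ∑ p : h × h, (starRingEnd ℂ) (x p) * y p := by
  simp [PiLp.inner_apply, RCLike.inner_apply]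
  exact Finset.sum_congr rfl fun _ _ => mul_comm _ _

set_option linter.unusedSectionVars false

lemma sVmat_add (P Q : Matrix ((h × h) × k × k) ((h × h) × k × k) ℂ) :
    sVmat (P + Q) = sVmat P + sVmat Q := by
  ext r c
  simp [sVmat, Finset.sum_add_distrib]

lemma sVmat_smul (c : ℂ) (P : Matrix ((h × h) × k × k) ((h × h) × k × k) ℂ) :
    sVmat (c • P) = c • sVmat P := by
  ext r s
  simp [sVmat, Finset.mul_sum]

lemma sVmat_zero : sVmat (0 : Matrix ((h × h) × k × k) ((h × h) × k × k) ℂ) = 0 := by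
  ext r c
  simp [sVmat]

lemma sVmat_kron (m₁ m₂ : Matrix h h ℂ) (n₁ n₂ : Matrix k k ℂ) :
    sVmat ((m₁ ⊗ₖ m₂ᵀ) ⊗ₖ (n₁ ⊗ₖ n₂ᵀ)) = (n₁ * n₂).trace • (m₁ ⊗ₖ m₂ᵀ) := by
  ext r c
  simp only [sVmat, Matrix.of_apply, Matrix.kroneckerMap_apply, Matrix.transpose_apply,
    Matrix.smul_apply, Matrix.trace, Matrix.diag_apply, Matrix.mul_apply, smul_eq_mul,
    Finset.sum_mul, Finset.mul_sum]
  refine Finset.sum_congr rfl fun u _ => Finset.sum_congr rfl fun v _ => ?_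
  ring

lemma weaver2_mulVec (A : Matrix (h × h) (h × h) ℂ) (y : (h × h) → ℂ) (p q : h) :
    weaver2 A (Matrix.of fun a b => y (a, b)) p q = (A *ᵥ y) (p, q) := by
  simp [weaver2, Matrix.mulVec, dotProduct, Fintype.sum_prod_type]


def toE (f : (h × h) → ℂ) : EuclideanSpace ℂ (h × h) := WithLp.toLp 2 f

lemma toE_apply (f : (h × h) → ℂ) (p : h × h) : toE f p = f p := rfl

lemma sVmat_mem (M : StarSubalgebra ℂ (Matrix h h ℂ)) (N : StarSubalgebra ℂ (Matrix k k ℂ))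
    (P : Matrix ((h × h) × k × k) ((h × h) × k × k) ℂ)
    (hP : P ∈ Submodule.span ℂ
      {X : Matrix ((h × h) × k × k) ((h × h) × k × k) ℂ |
        ∃ m₁ ∈ M, ∃ m₂ ∈ M, ∃ n₁ ∈ N, ∃ n₂ ∈ N,
          X = (m₁ ⊗ₖ m₂ᵀ) ⊗ₖ (n₁ ⊗ₖ (n₂ : Matrix k k ℂ)ᵀ)}) :
    sVmat P ∈ Submodule.span ℂ
      {X : Matrix (h × h) (h × h) ℂ | ∃ m₁ ∈ M, ∃ m₂ ∈ M, X = m₁ ⊗ₖ (m₂ : Matrix h h ℂ)ᵀ} := by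
  induction hP using Submodule.span_induction with
  | mem x hx =>
    obtain ⟨m₁, hm₁, m₂, hm₂, n₁, hn₁, n₂, hn₂, rfl⟩ := hx
    rw [sVmat_kron]
    exact Submodule.smul_mem _ _ (Submodule.subset_span ⟨m₁, hm₁, m₂, hm₂, rfl⟩)
  | zero => rw [sVmat_zero]; exact Submodule.zero_mem _
  | add x y hx hy ihx ihy => rw [sVmat_add]; exact Submodule.add_mem _ ihx ihy
  | smul c x hx ih => rw [sVmat_smul]; exact Submodule.smul_mem _ _ ih

theorem stmt14
    (M : StarSubalgebra ℂ (Matrix h h ℂ)) (N : StarSubalgebra ℂ (Matrix k k ℂ))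
    (hmin : centerS N = commutantS (h := k) N)
    (V : Submodule ℂ (Matrix (h × k) (h × k) ℂ)) (hV : IsQMR M N V)
    (P : Matrix ((h × h) × k × k) ((h × h) × k × k) ℂ)
    (hP₁ : P ∈ MMNN M N)
    (hP₂ : ∀ S : Matrix (h × k) (h × k) ℂ,
      weaver P S ∈ V ∧ ∀ T ∈ V, hsInner (S - weaver P S) T = 0) :
    sVmat P ∈ MM M ∧ (sVmat P).PosSemidef ∧
      Set.range (weaver2 (sVmat P)) = ptrK '' (V : Set (Matrix (h × k) (h × k) ℂ)) := by
  classical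
  -- orthogonal projection facts
  have hsplit : ∀ S T : Matrix (h × k) (h × k) ℂ, T ∈ V →
      hsInner S T = hsInner (weaver P S) T := by
    intro S T hT
    have e : weaver P S + (S - weaver P S) = S := by abel
    conv_lhs => rw [← e]
    rw [hsInner_add_left, (hP₂ S).2 T hT, add_zero]
  have hsymm : ∀ S T : Matrix (h × k) (h × k) ℂ,
      hsInner S (weaver P T) = hsInner (weaver P S) T := by
    intro S T
    rw [hsplit S (weaver P T) (hP₂ T).1]
    rw [hsInner_conj, ← hsplit T (weaver P S) (hP₂ S).1, ← hsInner_conj]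
  have hproj_self : ∀ S : Matrix (h × k) (h × k) ℂ,
      hsInner S (weaver P S) = hsInner (weaver P S) (weaver P S) :=
    fun S => hsplit S (weaver P S) (hP₂ S).1
  -- membership in MM M
  have mem1 : sVmat P ∈ MM M := sVmat_mem M N P hP₁
  -- positive semidefiniteness
  have herm : (sVmat P).IsHermitian := by
    unfold Matrix.IsHermitian
    ext r c
    rw [Matrix.conjTranspose_apply]
    rw [sVmat_entry P r c, sVmat_entry P c r]
    conv_lhs => rw [hsymm]
    conv_rhs => rw [hsInner_conj]
    rfl
  have psd : (sVmat P).PosSemidef := by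
    refine Matrix.posSemidef_iff_dotProduct_mulVec.mpr ⟨herm, fun x => ?_⟩
    have quad : dotProduct (star x) ((sVmat P) *ᵥ x)
        = hsInner ((Matrix.of fun a b => x (a, b)) ⊗ₖ (1 : Matrix k k ℂ))
            (weaver P ((Matrix.of fun a b => x (a, b)) ⊗ₖ (1 : Matrix k k ℂ))) := by
      rw [hsInner_kron_one, ptrK_weaver, hsInner_weaver2]
      simp only [dotProduct, Pi.star_apply, RCLike.star_def]
    rw [quad, hproj_self]
    exact hsInner_self_nonneg _
  refine ⟨mem1, psd, ?_⟩
  -- range equality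
  ext y
  constructor
  · rintro ⟨X, rfl⟩
    exact ⟨weaver P (X ⊗ₖ (1 : Matrix k k ℂ)), (hP₂ _).1, ptrK_weaver P X⟩
  · rintro ⟨T, hT, rfl⟩
    have hmem : toE (fun p : h × h => ptrK T p.1 p.2) ∈
        LinearMap.range (Lmap (sVmat P)) := by
      rw [← Submodule.orthogonal_orthogonal (LinearMap.range (Lmap (sVmat P))),
        Submodule.mem_orthogonal]
      intro Y hY
      have h1 : (inner ℂ (Lmap (sVmat P) Y) Y : ℂ) = 0 :=
        (Submodule.mem_orthogonal _ _).1 hY _ (LinearMap.mem_range_self _ Y)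
      have h2 : (inner ℂ Y (Lmap (sVmat P) Y) : ℂ) = 0 := by
        rw [← inner_conj_symm, h1, map_zero]
      have e1 : hsInner ((Matrix.of fun a b => Y (a, b)) ⊗ₖ (1 : Matrix k k ℂ))
          (weaver P ((Matrix.of fun a b => Y (a, b)) ⊗ₖ (1 : Matrix k k ℂ)))
          = (inner ℂ Y (Lmap (sVmat P) Y) : ℂ) := by
        rw [hsInner_kron_one, ptrK_weaver, hsInner_weaver2, euclid_inner]
        rfl
      have h5 : weaver P ((Matrix.of fun a b => Y (a, b)) ⊗ₖ (1 : Matrix k k ℂ)) = 0 :=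
        hsInner_self_eq_zero (by rw [← hproj_self, e1, h2])
      have h6 := (hP₂ ((Matrix.of fun a b => Y (a, b)) ⊗ₖ (1 : Matrix k k ℂ))).2 T hT
      rw [h5, sub_zero, hsInner_kron_one, hsInner_vec] at h6
      rw [euclid_inner]
      simpa [toE_apply] using h6
    obtain ⟨y0, hy0⟩ := hmem
    refine ⟨Matrix.of fun a b => y0 (a, b), ?_⟩
    ext p q
    rw [weaver2_mulVec]
    have h7 : ∀ r : h × h, Lmap (sVmat P) y0 r = ptrK T r.1 r.2 := fun r => by rw [hy0]; rfl
    exact h7 (p, q)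


end Stmt14
end

section
/- Let V ⊆ B(H) ⊗ N be a quantum multi-relation on (M, N), with M and N minimally represented, let A_{P_V} : M ⊗ N → M ⊗ N be its quantum multi-adjacency operator and A_{S_V} : M → M its weighted adjacency operator. Regarding A_{P_V} as an element of B(L²(M) ⊗ L²(N)) and A_{S_V} as an element of B(L²(M)), one has (id ⊗ tr_{L²(N)})(A_{P_V}) = A_{S_V}, where tr_{L²(N)} is the trace on B(L²(N)). -/
/-!
STATEMENT 15: Let `V ⊆ B(H) ⊗ N` be a quantum multi-relation on `(M, N)`, with `M` and
`N` minimally represented (realized here as the multimatrix algebras `M = ⊕_a B(ℂ^{da a})`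
acting block-diagonally on `H = ⊕_a ℂ^{da a}` and `N = ⊕_b B(ℂ^{db b})` on
`K = ⊕_b ℂ^{db b}`, which are exactly the minimal representations), let
`A_{P_V} : M ⊗ N → M ⊗ N` be its quantum multi-adjacency operator and
`A_{S_V} : M → M` its weighted adjacency operator.  Regarding `A_{P_V}` as an element
of `B(L²(M) ⊗ L²(N))` and `A_{S_V}` of `B(L²(M))` (matrices in the Hilbert–Schmidt
coordinates of `M` and `N`), one has `(id ⊗ tr_{L²(N)})(A_{P_V}) = A_{S_V}`, where
`id ⊗ tr_{L²(N)}` is the partial trace over the second tensor factor.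

The multi-edge indicator `P_V ∈ M ⊗ M^op ⊗ N ⊗ N^op` is hypothesized through its
characterizing property: it lies in (the 4-leg faithful representation of)
`M ⊗ M^op ⊗ N ⊗ N^op` and its Weaver action is the Hilbert–Schmidt-orthogonal
projection onto `V`.  The adjacency operators are extracted from `P_V` (and from
`S_V = (id⊗id⊗tr_K)((id⊗id⊗m)(P_V))`) by the entry formulas `APmat`, `ASmat`.
-/

open scoped Kronecker Matrix ComplexOrder

namespace Stmt15

abbrev PiMat (ι : Type) (d : ι → Type) [∀ i, Fintype (d i)] : Type _ :=
  ∀ i, Matrix (d i) (d i) ℂ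

variable {ιa ιb : Type} [Fintype ιa] [DecidableEq ιa] [Fintype ιb] [DecidableEq ιb]
  {da : ιa → Type} [∀ a, Fintype (da a)] [∀ a, DecidableEq (da a)]
  {db : ιb → Type} [∀ b, Fintype (db b)] [∀ b, DecidableEq (db b)]

/-- `B(H) ⊗ N ⊆ B(H ⊗ K)` for the block-diagonally represented `N`. -/
def BHN : Set (Matrix ((Σ a, da a) × Σ b, db b) ((Σ a, da a) × Σ b, db b) ℂ) :=
  ↑(Submodule.span ℂ
      {T | ∃ (A : Matrix (Σ a, da a) (Σ a, da a) ℂ) (y : PiMat ιb db),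
        T = A ⊗ₖ Matrix.blockDiagonal' y})

/-- Quantum multi-relation on `(M, N)` in the block-diagonal (minimal) realization:
subspace of `B(H) ⊗ N`, an `(M'⊗1)`-bimodule, invariant under `1 ⊗ Z(N)`
(`Z(N)` consists of the block-scalar matrices). -/
def IsQMR (V : Submodule ℂ (Matrix ((Σ a, da a) × Σ b, db b)
    ((Σ a, da a) × Σ b, db b) ℂ)) : Prop :=
  (∀ T ∈ V, T ∈ BHN (da := da) (db := db)) ∧
  (∀ A : Matrix (Σ a, da a) (Σ a, da a) ℂ,
    (∀ x : PiMat ιa da, A * Matrix.blockDiagonal' x = Matrix.blockDiagonal' x * A) →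
    ∀ T ∈ V, (A ⊗ₖ (1 : Matrix (Σ b, db b) (Σ b, db b) ℂ)) * T ∈ V ∧
      T * (A ⊗ₖ (1 : Matrix (Σ b, db b) (Σ b, db b) ℂ)) ∈ V) ∧
  (∀ c : ιb → ℂ, ∀ T ∈ V,
    ((1 : Matrix (Σ a, da a) (Σ a, da a) ℂ) ⊗ₖ
      Matrix.blockDiagonal' (fun b => c b • (1 : Matrix (db b) (db b) ℂ))) * T ∈ V)

/-- The 4-leg faithful representation of `M ⊗ M^op ⊗ N ⊗ N^op`. -/
def MMNN : Set (Matrix (((Σ a, da a) × Σ a, da a) × (Σ b, db b) × Σ b, db b)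
    (((Σ a, da a) × Σ a, da a) × (Σ b, db b) × Σ b, db b) ℂ) :=
  ↑(Submodule.span ℂ
      {X | ∃ m₁ m₂ : PiMat ιa da, ∃ n₁ n₂ : PiMat ιb db,
        X = (Matrix.blockDiagonal' m₁ ⊗ₖ (Matrix.blockDiagonal' m₂)ᵀ) ⊗ₖ
            (Matrix.blockDiagonal' n₁ ⊗ₖ (Matrix.blockDiagonal' n₂)ᵀ)})

/-- The Weaver action of the 4-leg tensor on `B(H ⊗ K)`. -/
noncomputable def weaver
    (P : Matrix (((Σ a, da a) × Σ a, da a) × (Σ b, db b) × Σ b, db b)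
      (((Σ a, da a) × Σ a, da a) × (Σ b, db b) × Σ b, db b) ℂ)
    (S : Matrix ((Σ a, da a) × Σ b, db b) ((Σ a, da a) × Σ b, db b) ℂ) :
    Matrix ((Σ a, da a) × Σ b, db b) ((Σ a, da a) × Σ b, db b) ℂ :=
  Matrix.of fun r c =>
    ∑ a : Σ a, da a, ∑ b : Σ a, da a, ∑ u : Σ b, db b, ∑ v : Σ b, db b,
      P ((r.1, c.1), (r.2, c.2)) ((a, b), (u, v)) * S (a, u) (b, v)

/-- Hilbert–Schmidt inner product. -/
noncomputable def hsInner {d : Type} [Fintype d] (A B : Matrix d d ℂ) : ℂ :=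
  (Aᴴ * B).trace

/-- `S_V = (id⊗id⊗tr_K)((id⊗id⊗m)(P_V))` extracted from the 4-leg tensor. -/
noncomputable def sVmat
    (P : Matrix (((Σ a, da a) × Σ a, da a) × (Σ b, db b) × Σ b, db b)
      (((Σ a, da a) × Σ a, da a) × (Σ b, db b) × Σ b, db b) ℂ) :
    Matrix ((Σ a, da a) × Σ a, da a) ((Σ a, da a) × Σ a, da a) ℂ :=
  Matrix.of fun r c => ∑ u : Σ b, db b, ∑ v : Σ b, db b, P (r, (u, u)) (c, (v, v))

/-- The matrix of the multi-adjacency operator `A_{P_V} : M ⊗ N → M ⊗ N`,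
`A_{P_V}(m ⊗ n) = (tr⊗id⊗tr⊗id)(P_V (m⊗1⊗n⊗1))`, in the Hilbert–Schmidt coordinates
of `L²(M) ⊗ L²(N)`. -/
noncomputable def APmat
    (P : Matrix (((Σ a, da a) × Σ a, da a) × (Σ b, db b) × Σ b, db b)
      (((Σ a, da a) × Σ a, da a) × (Σ b, db b) × Σ b, db b) ℂ) :
    Matrix ((Σ a, da a × da a) × Σ b, db b × db b)
      ((Σ a, da a × da a) × Σ b, db b × db b) ℂ :=
  Matrix.of fun r c =>
    P ((⟨c.1.1, c.1.2.2⟩, ⟨r.1.1, r.1.2.2⟩), (⟨c.2.1, c.2.2.2⟩, ⟨r.2.1, r.2.2.2⟩))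
      ((⟨c.1.1, c.1.2.1⟩, ⟨r.1.1, r.1.2.1⟩), (⟨c.2.1, c.2.2.1⟩, ⟨r.2.1, r.2.2.1⟩))

/-- The matrix of the weighted adjacency operator `A_{S}(m) = (tr⊗id)(S (m⊗1))` in the
Hilbert–Schmidt coordinates of `L²(M)`. -/
noncomputable def ASmat
    (S : Matrix ((Σ a, da a) × Σ a, da a) ((Σ a, da a) × Σ a, da a) ℂ) :
    Matrix (Σ a, da a × da a) (Σ a, da a × da a) ℂ :=
  Matrix.of fun r c =>
    S ((⟨c.1, c.2.2⟩ : Σ a, da a), (⟨r.1, r.2.2⟩ : Σ a, da a))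
      ((⟨c.1, c.2.1⟩ : Σ a, da a), (⟨r.1, r.2.1⟩ : Σ a, da a))

/-- Partial trace over the second tensor factor. -/
noncomputable def ptrSecond {I J : Type} [Fintype J]
    (X : Matrix (I × J) (I × J) ℂ) : Matrix I I ℂ :=
  Matrix.of fun i i' => ∑ j : J, X (i, j) (i', j)

theorem sum_sigma_sum_sigma_of_fst_ne {ι M : Type} {d : ι → Type} [Fintype ι]
    [∀ i, Fintype (d i)] [AddCommMonoid M] (f : (Σ i, d i) → (Σ i, d i) → M)
    (hf : ∀ u v, u.1 ≠ v.1 → f u v = 0) :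
    ∑ u, ∑ v, f u v = ∑ i, ∑ x, ∑ y, f ⟨i, x⟩ ⟨i, y⟩ := by
  rw [Fintype.sum_sigma]
  refine Finset.sum_congr rfl fun i _ => Finset.sum_congr rfl fun x _ => ?_
  rw [Fintype.sum_sigma, Finset.sum_eq_single i (fun j _ hj => ?_) (by simp)]
  exact Finset.sum_eq_zero fun y _ => hf _ _ (Ne.symm hj)

theorem MMNN_apply_eq_zero_of_fst_ne {ι κ : Type} [DecidableEq ι] [DecidableEq κ]
    {d : ι → Type} {e : κ → Type} [∀ i, Fintype (d i)] [∀ i, Fintype (e i)]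
    {P : Matrix (((Σ i, d i) × Σ i, d i) × (Σ k, e k) × Σ k, e k)
      (((Σ i, d i) × Σ i, d i) × (Σ k, e k) × Σ k, e k) ℂ}
    (hP : P ∈ MMNN (da := d) (db := e)) (r c : (Σ i, d i) × Σ i, d i)
    {u v : Σ k, e k} (u' v' : Σ k, e k) (huv : u.1 ≠ v.1) :
    P (r, (u, u')) (c, (v, v')) = 0 := by
  refine (Submodule.span_le (p := LinearMap.ker (Matrix.entryLinearMap ℂ ℂ _ _)) |>.mpr ?_) hP
  rintro _ ⟨m₁, m₂, n₁, n₂, rfl⟩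
  obtain ⟨k, x⟩ := u
  obtain ⟨l, y⟩ := v
  simp [Matrix.blockDiagonal'_apply_ne n₁ x y huv]

theorem stmt15_general
    (P : Matrix (((Σ a, da a) × Σ a, da a) × (Σ b, db b) × Σ b, db b)
      (((Σ a, da a) × Σ a, da a) × (Σ b, db b) × Σ b, db b) ℂ)
    (hP₁ : P ∈ MMNN (da := da) (db := db)) :
    ptrSecond (APmat P) = ASmat (sVmat P) := by
  ext r c
  simp only [ptrSecond, ASmat, sVmat, APmat, Matrix.of_apply]
  rw [sum_sigma_sum_sigma_of_fst_ne _
    fun u v => MMNN_apply_eq_zero_of_fst_ne hP₁ _ _ u v, Fintype.sum_sigma]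
  simp only [Fintype.sum_prod_type]
  exact Finset.sum_congr rfl fun b _ => Finset.sum_comm

theorem stmt15
    (V : Submodule ℂ (Matrix ((Σ a, da a) × Σ b, db b) ((Σ a, da a) × Σ b, db b) ℂ))
    (hV : IsQMR V)
    (P : Matrix (((Σ a, da a) × Σ a, da a) × (Σ b, db b) × Σ b, db b)
      (((Σ a, da a) × Σ a, da a) × (Σ b, db b) × Σ b, db b) ℂ)
    (hP₁ : P ∈ MMNN (da := da) (db := db))
    (hP₂ : ∀ S, weaver P S ∈ V ∧ ∀ T ∈ V, hsInner (S - weaver P S) T = 0) :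
    ptrSecond (APmat P) = ASmat (sVmat P) :=
  stmt15_general P hP₁

end Stmt15
end
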